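/- arXiv:2309.02089 — 2 statements merged into one kernel-verified Lean document; each statement's English description precedes it below -/
import Mathlib

section
/- Let {U_{ij}}_{i≠j} be i.i.d. mean-zero random variables with variance σ², independent of the family {X_{ij}}. If two 4-element index sets C = {i,j,k,l} and C' = {m,n,o,p} satisfy |C ∩ C'| ≤ 1, then the symmetric kernels s_C and s_{C'} built from pairwise differences of the X's multiplied by pairwise differences of the U's are uncorrelated; i.e. Δ_0 = Δ_1 = 0. -/
open MeasureTheory ProbabilityTheory Finset

/-- The symmetrized kernel: average over all ordered 4-tuples of distinct elements
(i.e. permutations) of a 4-element set `C` of the product of pairwise-differenced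
`X`'s and pairwise-differenced `U`'s. -/
noncomputable def sKer {Ω : Type*} {N : ℕ} (X U : Fin N → Fin N → Ω → ℝ)
    (C : Finset (Fin N)) (ω : Ω) : ℝ :=
  ((Nat.factorial 4 : ℝ))⁻¹ * ∑ a ∈ C, ∑ b ∈ C.erase a, ∑ c ∈ (C.erase a).erase b,
    ∑ d ∈ ((C.erase a).erase b).erase c,
      ((X a b ω - X a c ω) - (X d b ω - X d c ω)) *
        ((U a b ω - U a c ω) - (U d b ω - U d c ω))

noncomputable def KK {N : ℕ} (C : Finset (Fin N)) (x u : Fin N → Fin N → ℝ) : ℝ :=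
  ((Nat.factorial 4 : ℝ))⁻¹ * ∑ a ∈ C, ∑ b ∈ C.erase a, ∑ c ∈ (C.erase a).erase b,
    ∑ d ∈ ((C.erase a).erase b).erase c,
      ((x a b - x a c) - (x d b - x d c)) * ((u a b - u a c) - (u d b - u d c))

lemma KK_congr {N : ℕ} {C : Finset (Fin N)} {x x' u u' : Fin N → Fin N → ℝ}
    (h : ∀ a b, a ∈ C → b ∈ C → a ≠ b → x a b = x' a b ∧ u a b = u' a b) :
    KK C x u = KK C x' u' := by
  unfold KK
  congr 1
  refine Finset.sum_congr rfl fun a ha => Finset.sum_congr rfl fun b hb =>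
    Finset.sum_congr rfl fun c hc => Finset.sum_congr rfl fun d hd => ?_
  rw [Finset.mem_erase] at hb
  rw [Finset.mem_erase, Finset.mem_erase] at hc
  rw [Finset.mem_erase, Finset.mem_erase, Finset.mem_erase] at hd
  obtain ⟨hba, hbC⟩ := hb
  obtain ⟨hcb, hca, hcC⟩ := hc
  obtain ⟨hdc, hdb, hda, hdC⟩ := hd
  rw [(h a b ha hbC (Ne.symm hba)).1, (h a b ha hbC (Ne.symm hba)).2,
      (h a c ha hcC (Ne.symm hca)).1, (h a c ha hcC (Ne.symm hca)).2,
      (h d b hdC hbC hdb).1, (h d b hdC hbC hdb).2,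
      (h d c hdC hcC hdc).1, (h d c hdC hcC hdc).2]

lemma KK_add_u {N : ℕ} (C : Finset (Fin N)) (x u v : Fin N → Fin N → ℝ) :
    KK C x (fun a b => u a b + v a b) = KK C x u + KK C x v := by
  unfold KK
  rw [← mul_add, ← Finset.sum_add_distrib]
  congr 1
  refine Finset.sum_congr rfl fun a _ => ?_
  rw [← Finset.sum_add_distrib]
  refine Finset.sum_congr rfl fun b _ => ?_
  rw [← Finset.sum_add_distrib]
  refine Finset.sum_congr rfl fun c _ => ?_
  rw [← Finset.sum_add_distrib]
  refine Finset.sum_congr rfl fun d _ => ?_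
  ring

lemma KK_smul_u {N : ℕ} (C : Finset (Fin N)) (r : ℝ) (x u : Fin N → Fin N → ℝ) :
    KK C x (fun a b => r * u a b) = r * KK C x u := by
  unfold KK
  rw [mul_left_comm]
  congr 1
  rw [Finset.mul_sum]
  refine Finset.sum_congr rfl fun a _ => ?_
  rw [Finset.mul_sum]
  refine Finset.sum_congr rfl fun b _ => ?_
  rw [Finset.mul_sum]
  refine Finset.sum_congr rfl fun c _ => ?_
  rw [Finset.mul_sum]
  refine Finset.sum_congr rfl fun d _ => ?_
  ring

lemma KK_measurable {α : Type*} [MeasurableSpace α] {N : ℕ} (C : Finset (Fin N))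
    (x u : Fin N → Fin N → α → ℝ) (hx : ∀ a b, Measurable (x a b))
    (hu : ∀ a b, Measurable (u a b)) :
    Measurable (fun z => KK C (fun a b => x a b z) (fun a b => u a b z)) := by
  unfold KK
  refine Measurable.const_mul ?_ _
  refine Finset.measurable_sum _ fun a _ => Finset.measurable_sum _ fun b _ =>
    Finset.measurable_sum _ fun c _ => Finset.measurable_sum _ fun d _ => ?_
  exact (((hx a b).sub (hx a c)).sub ((hx d b).sub (hx d c))).mul
        (((hu a b).sub (hu a c)).sub ((hu d b).sub (hu d c)))

lemma pi_rect {ι : Type*} [Fintype ι] (ν : ι → Measure ℝ) [∀ i, IsProbabilityMeasure (ν i)]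
    (S : Finset ι) (sets : ι → Set ℝ) (h : ∀ i ∈ S, MeasurableSet (sets i)) :
    Measure.pi ν (⋂ i ∈ S, (fun t : ι → ℝ => t i) ⁻¹' sets i) = ∏ i ∈ S, ν i (sets i) := by
  classical
  have hset : (⋂ i ∈ S, (fun t : ι → ℝ => t i) ⁻¹' sets i)
      = Set.pi Set.univ (fun i => if i ∈ S then sets i else Set.univ) := by
    ext t
    simp only [Set.mem_iInter, Set.mem_preimage, Set.mem_pi, Set.mem_univ, true_implies]
    constructor
    · intro ht i
      split_ifs with hi
      · exact ht i hi
      · exact Set.mem_univ _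
    · intro ht i hi
      have := ht i
      rwa [if_pos hi] at this
  rw [hset, Measure.pi_pi]
  rw [Finset.prod_congr rfl (g := fun i => if i ∈ S then ν i (sets i) else 1)
    (fun i _ => by by_cases hi : i ∈ S <;> simp [hi])]
  rw [Finset.prod_ite_mem, Finset.univ_inter]

lemma pi_map_eval {ι : Type*} [Fintype ι] (ν : ι → Measure ℝ)
    [∀ i, IsProbabilityMeasure (ν i)] (i : ι) :
    (Measure.pi ν).map (fun t : ι → ℝ => t i) = ν i := by
  ext s hs
  rw [Measure.map_apply (measurable_pi_apply i) hs]
  classical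
  have := pi_rect ν {i} (fun _ => s) (fun _ _ => hs)
  simpa using this

lemma iIndepFun_eval {ι : Type*} [Fintype ι] (ν : ι → Measure ℝ)
    [∀ i, IsProbabilityMeasure (ν i)] :
    iIndepFun (fun i (t : ι → ℝ) => t i) (Measure.pi ν) := by
  classical
  rw [iIndepFun_iff_measure_inter_preimage_eq_mul]
  intro S sets hsets
  rw [pi_rect ν S sets hsets]
  refine Finset.prod_congr rfl ?_
  intro j hj
  have hms : ∀ k ∈ ({j} : Finset ι), MeasurableSet (sets k) := by
    intro k hk
    rw [Finset.mem_singleton] at hk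
    subst hk
    exact hsets k hj
  have h5 := pi_rect ν {j} sets hms
  simpa using h5.symm

lemma integrable_of_indep_add {Ω' : Type*} [MeasurableSpace Ω'] {μ : Measure Ω'}
    [IsProbabilityMeasure μ] {W R : Ω' → ℝ} (h : IndepFun W R μ)
    (hW : Measurable W) (hR : Measurable R)
    (hint : Integrable (fun a => W a + R a) μ) : Integrable W μ ∧ Integrable R μ := by
  have hmap : μ.map (fun a => (W a, R a)) = (μ.map W).prod (μ.map R) :=
    (indepFun_iff_map_prod_eq_prod_map_map hW.aemeasurable hR.aemeasurable).mp h
  have hmeas : Measurable (fun a => (W a, R a)) := hW.prodMk hR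
  have h2 : Integrable (fun p : ℝ × ℝ => p.1 + p.2) (μ.map (fun a => (W a, R a))) := by
    rw [integrable_map_measure (g := fun p : ℝ × ℝ => p.1 + p.2)
      (measurable_fst.add measurable_snd).aestronglyMeasurable
      hmeas.aemeasurable]
    exact hint
  rw [hmap] at h2
  haveI : IsProbabilityMeasure (μ.map W) := Measure.isProbabilityMeasure_map hW.aemeasurable
  haveI : IsProbabilityMeasure (μ.map R) := Measure.isProbabilityMeasure_map hR.aemeasurable
  constructor
  · obtain ⟨y, hy⟩ := h2.prod_left_ae.exists
    have h3 : Integrable (fun x : ℝ => x) (μ.map W) :=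
      (hy.sub (integrable_const y)).congr (Filter.Eventually.of_forall fun x => by simp)
    rw [integrable_map_measure (g := fun x : ℝ => x) measurable_id.aestronglyMeasurable
      hW.aemeasurable] at h3
    exact h3
  · obtain ⟨x, hx⟩ := h2.prod_right_ae.exists
    have h3 : Integrable (fun y : ℝ => y) (μ.map R) :=
      (hx.sub (integrable_const x)).congr (Filter.Eventually.of_forall fun y => by simp)
    rw [integrable_map_measure (g := fun y : ℝ => y) measurable_id.aestronglyMeasurable
      hR.aemeasurable] at h3
    exact h3

section
variable {ι : Type*} [Fintype ι] (ν : ι → Measure ℝ) [∀ i, IsProbabilityMeasure (ν i)]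

lemma aux_L (hmean : ∀ i, ∫ x, x ∂ν i = 0) (d : ι → ℝ)
    (hint : Integrable (fun t => ∑ i, d i * t i) (Measure.pi ν)) :
    ∫ t, (∑ i, d i * t i) ∂Measure.pi ν = 0 := by
  classical
  suffices H : ∀ s : Finset ι, Integrable (fun t => ∑ i ∈ s, d i * t i) (Measure.pi ν) →
      ∫ t, (∑ i ∈ s, d i * t i) ∂Measure.pi ν = 0 from H Finset.univ hint
  intro s
  induction s using Finset.induction_on with
  | empty => intro _; simp
  | @insert a s ha ih =>
    intro hint'
    set f : ι → (ι → ℝ) → ℝ := fun i t => d i * t i with hf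
    have hmeasf : ∀ i, Measurable (f i) := fun i => by
      rw [hf]; exact (measurable_pi_apply (X := fun _ : ι => ℝ) i).const_mul (d i)
    have hiI : iIndepFun f (Measure.pi ν) :=
      (iIndepFun_eval ν).comp (fun i (x : ℝ) => d i * x)
        (fun i => (measurable_id.const_mul (d i)))
    have hindep : IndepFun (∑ j ∈ s, f j) (f a) (Measure.pi ν) :=
      hiI.indepFun_finset_sum_of_notMem hmeasf ha
    have hWfun : (∑ j ∈ s, f j) = fun t => ∑ j ∈ s, d j * t j := by
      funext t
      rw [Finset.sum_apply]
    have hfun : (fun t : ι → ℝ => ∑ i ∈ insert a s, d i * t i)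
        = fun t => (∑ j ∈ s, f j) t + f a t := by
      funext t
      rw [Finset.sum_insert ha, hWfun]
      simp only [hf]
      ring
    rw [hfun] at hint' ⊢
    have hWmeas : Measurable (∑ j ∈ s, f j : (ι → ℝ) → ℝ) := by
      rw [hWfun]
      exact Finset.measurable_sum s fun j _ => hmeasf j
    obtain ⟨hW, hR⟩ := integrable_of_indep_add hindep hWmeas (hmeasf a) hint'
    rw [integral_add hW hR]
    have hIW : ∫ t, (∑ j ∈ s, f j) t ∂Measure.pi ν = 0 := by
      have := ih (by rw [← hWfun]; exact hW)
      rw [hWfun]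
      exact this
    have hIR : ∫ t, f a t ∂Measure.pi ν = 0 := by
      by_cases hda : d a = 0
      · simp [hf, hda]
      · have hta : Integrable (fun t : ι → ℝ => t a) (Measure.pi ν) := by
          have h6 := hR.const_mul (d a)⁻¹
          refine h6.congr (Filter.Eventually.of_forall fun t => ?_)
          simp [hf, ← mul_assoc, inv_mul_cancel₀ hda]
        have heval : ∫ t : ι → ℝ, t a ∂Measure.pi ν = ∫ x, x ∂ν a := by
          rw [← pi_map_eval ν a]
          exact (integral_map (μ := Measure.pi ν) (φ := fun t : ι → ℝ => t a)
            (f := fun x : ℝ => x) (measurable_pi_apply a).aemeasurable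
            measurable_id.aestronglyMeasurable).symm
        simp only [hf]
        rw [integral_const_mul, heval, hmean a, mul_zero]
    rw [hIW, hIR, add_zero]

lemma aux_L3 [DecidableEq ι] (hmean : ∀ i, ∫ x, x ∂ν i = 0) (G : (ι → ℝ) → ℝ)
    (hlin : IsLinearMap ℝ G) (hint : Integrable G (Measure.pi ν)) :
    ∫ t, G t ∂Measure.pi ν = 0 := by
  have hrep : ∀ t, G t = ∑ i, G (Pi.single i 1) * t i := by
    intro t
    have ht : t = ∑ i, t i • (Pi.single i 1 : ι → ℝ) := by
      funext j
      simp [Finset.sum_apply, Pi.single_apply]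
    set L := IsLinearMap.mk' G hlin with hL
    have hGL : G = ⇑L := by rw [hL]; rfl
    conv_lhs => rw [ht, hGL, map_sum]
    refine Finset.sum_congr rfl fun i _ => ?_
    rw [LinearMap.map_smul, smul_eq_mul, mul_comm, hGL]
  have hfun : G = fun t => ∑ i, G (Pi.single i 1) * t i := funext hrep
  rw [hfun] at hint ⊢
  exact aux_L ν hmean _ hint

end

section
variable {N : ℕ} (pp : {p : Fin N × Fin N // p.1 ≠ p.2} → Prop) [DecidablePred pp]

noncomputable def UAa (i j : Fin N)
    (s : {q : {p : Fin N × Fin N // p.1 ≠ p.2} // ¬ pp q} → ℝ) : ℝ :=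
  if h : i ≠ j then (if h2 : pp ⟨(i, j), h⟩ then 0 else s ⟨⟨(i, j), h⟩, h2⟩) else 0

noncomputable def UBb (i j : Fin N)
    (t : {q : {p : Fin N × Fin N // p.1 ≠ p.2} // pp q} → ℝ) : ℝ :=
  if h : i ≠ j then (if h2 : pp ⟨(i, j), h⟩ then t ⟨⟨(i, j), h⟩, h2⟩ else 0) else 0

lemma UAa_measurable (i j : Fin N) : Measurable (UAa pp i j) := by
  unfold UAa
  by_cases h : i ≠ j
  · simp only [dif_pos h]
    by_cases h2 : pp ⟨(i, j), h⟩
    · simp only [dif_pos h2]; exact measurable_const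
    · simp only [dif_neg h2]; exact measurable_pi_apply _
  · simp only [dif_neg h]; exact measurable_const

lemma UBb_measurable (i j : Fin N) : Measurable (UBb pp i j) := by
  unfold UBb
  by_cases h : i ≠ j
  · simp only [dif_pos h]
    by_cases h2 : pp ⟨(i, j), h⟩
    · simp only [dif_pos h2]; exact measurable_pi_apply _
    · simp only [dif_neg h2]; exact measurable_const
  · simp only [dif_neg h]; exact measurable_const

lemma UAa_eval (i j : Fin N) (h : i ≠ j) (h2 : ¬ pp ⟨(i, j), h⟩)
    (s : {q : {p : Fin N × Fin N // p.1 ≠ p.2} // ¬ pp q} → ℝ) :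
    UAa pp i j s = s ⟨⟨(i, j), h⟩, h2⟩ := by
  unfold UAa
  rw [dif_pos h, dif_neg h2]

lemma UBb_eval (i j : Fin N) (h : i ≠ j) (h2 : pp ⟨(i, j), h⟩)
    (t : {q : {p : Fin N × Fin N // p.1 ≠ p.2} // pp q} → ℝ) :
    UBb pp i j t = t ⟨⟨(i, j), h⟩, h2⟩ := by
  unfold UBb
  rw [dif_pos h, dif_pos h2]

lemma UBb_add (i j : Fin N) (t t' : {q : {p : Fin N × Fin N // p.1 ≠ p.2} // pp q} → ℝ) :
    UBb pp i j (t + t') = UBb pp i j t + UBb pp i j t' := by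
  unfold UBb
  by_cases h : i ≠ j
  · simp only [dif_pos h]
    by_cases h2 : pp ⟨(i, j), h⟩
    · simp only [dif_pos h2, Pi.add_apply]
    · simp only [dif_neg h2, add_zero]
  · simp only [dif_neg h, add_zero]

lemma UBb_smul (i j : Fin N) (r : ℝ)
    (t : {q : {p : Fin N × Fin N // p.1 ≠ p.2} // pp q} → ℝ) :
    UBb pp i j (r • t) = r * UBb pp i j t := by
  unfold UBb
  by_cases h : i ≠ j
  · simp only [dif_pos h]
    by_cases h2 : pp ⟨(i, j), h⟩
    · simp only [dif_pos h2, Pi.smul_apply, smul_eq_mul]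
    · simp only [dif_neg h2, mul_zero]
  · simp only [dif_neg h, mul_zero]

noncomputable def F1 (C : Finset (Fin N)) :
    (Fin N × Fin N → ℝ) × ({q : {p : Fin N × Fin N // p.1 ≠ p.2} // ¬ pp q} → ℝ) → ℝ :=
  fun z => KK C (fun a b => z.1 (a, b)) (fun a b => UAa pp a b z.2)

noncomputable def F2 (C' : Finset (Fin N)) :
    (Fin N × Fin N → ℝ) × ({q : {p : Fin N × Fin N // p.1 ≠ p.2} // pp q} → ℝ) → ℝ :=
  fun z => KK C' (fun a b => z.1 (a, b)) (fun a b => UBb pp a b z.2)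

lemma F1_measurable (C : Finset (Fin N)) : Measurable (F1 pp C) := by
  unfold F1
  exact KK_measurable C _ _ (fun a b => (measurable_pi_apply (a, b)).comp measurable_fst)
    (fun a b => (UAa_measurable pp a b).comp measurable_snd)

lemma F2_measurable (C' : Finset (Fin N)) : Measurable (F2 pp C') := by
  unfold F2
  exact KK_measurable C' _ _ (fun a b => (measurable_pi_apply (a, b)).comp measurable_fst)
    (fun a b => (UBb_measurable pp a b).comp measurable_snd)

lemma F2_linear (C' : Finset (Fin N)) (x : Fin N × Fin N → ℝ) :
    IsLinearMap ℝ (fun t => F2 pp C' (x, t)) := by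
  constructor
  · intro t t'
    show KK C' (fun a b => x (a, b)) (fun a b => UBb pp a b (t + t'))
        = F2 pp C' (x, t) + F2 pp C' (x, t')
    rw [show (fun a b => UBb pp a b (t + t'))
        = fun a b => UBb pp a b t + UBb pp a b t' from
      funext fun a => funext fun b => UBb_add pp a b t t']
    rw [KK_add_u]
    rfl
  · intro r t
    show KK C' (fun a b => x (a, b)) (fun a b => UBb pp a b (r • t)) = r • F2 pp C' (x, t)
    rw [show (fun a b => UBb pp a b (r • t)) = fun a b => r * UBb pp a b t from
      funext fun a => funext fun b => UBb_smul pp a b r t]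
    rw [KK_smul_u, smul_eq_mul]
    rfl

end

theorem stmt8 {Ω : Type*} [MeasureSpace Ω] [IsProbabilityMeasure (ℙ : Measure Ω)]
    {N : ℕ} (X U : Fin N → Fin N → Ω → ℝ) (σ2 : ℝ)
    (hXmeas : ∀ a b, Measurable (X a b)) (hUmeas : ∀ a b, Measurable (U a b))
    -- the U_{ij}, i ≠ j, are mutually independent
    (hUindep : iIndepFun
      (fun p : {p : Fin N × Fin N // p.1 ≠ p.2} => U p.1.1 p.1.2) ℙ)
    -- identically distributed
    (hUident : ∀ p q : {p : Fin N × Fin N // p.1 ≠ p.2},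
      IdentDistrib (U p.1.1 p.1.2) (U q.1.1 q.1.2) ℙ ℙ)
    -- mean zero, common variance σ²
    (hUmean : ∀ a b, a ≠ b → ∫ ω, U a b ω ∂ℙ = 0)
    (hUvar : ∀ a b, a ≠ b → ∫ ω, (U a b ω) ^ 2 ∂ℙ = σ2)
    -- the U family is independent of the X family
    (hUXindep : IndepFun (fun ω (p : Fin N × Fin N) => U p.1 p.2 ω)
      (fun ω (p : Fin N × Fin N) => X p.1 p.2 ω) ℙ)
    -- second moments finite
    (hL2 : ∀ C : Finset (Fin N), C.card = 4 → MemLp (sKer X U C) 2 ℙ)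
    (C C' : Finset (Fin N)) (hC : C.card = 4) (hC' : C'.card = 4)
    (hq : (C ∩ C').card ≤ 1) :
    ∫ ω, sKer X U C ω * sKer X U C' ω ∂ℙ = 0 := by
  classical
  -- the predicate selecting pairs with both entries in C'
  set pp : {p : Fin N × Fin N // p.1 ≠ p.2} → Prop :=
    fun q => q.1.1 ∈ C' ∧ q.1.2 ∈ C' with hpp
  -- pairs of distinct elements of C are never pairs of C'
  have hCS : ∀ a b : Fin N, a ∈ C → b ∈ C → a ≠ b → ¬(a ∈ C' ∧ b ∈ C') := by
    rintro a b haC hbC hab ⟨haC', hbC'⟩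
    have hsub : ({a, b} : Finset (Fin N)) ⊆ C ∩ C' := by
      intro x hx
      rw [Finset.mem_insert, Finset.mem_singleton] at hx
      rcases hx with rfl | rfl
      · exact Finset.mem_inter.mpr ⟨haC, haC'⟩
      · exact Finset.mem_inter.mpr ⟨hbC, hbC'⟩
    have h2 : 2 ≤ (C ∩ C').card := by
      have hcc := Finset.card_le_card hsub
      rwa [Finset.card_insert_of_notMem (by simpa using hab), Finset.card_singleton] at hcc
    omega
  -- basic random vectors
  set Uv : Ω → ({p : Fin N × Fin N // p.1 ≠ p.2} → ℝ) :=
    fun ω q => U q.1.1 q.1.2 ω with hUvdef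
  have hUv : Measurable Uv := measurable_pi_lambda _ fun q => hUmeas _ _
  set Xv : Ω → (Fin N × Fin N → ℝ) := fun ω p => X p.1 p.2 ω with hXvdef
  have hXv : Measurable Xv := measurable_pi_lambda _ fun p => hXmeas _ _
  set ν : {p : Fin N × Fin N // p.1 ≠ p.2} → Measure ℝ :=
    fun q => Measure.map (U q.1.1 q.1.2) ℙ with hνdef
  haveI hνP : ∀ q, IsProbabilityMeasure (ν q) :=
    fun q => Measure.isProbabilityMeasure_map (hUmeas _ _).aemeasurable
  have hmean' : ∀ q, ∫ x, x ∂ν q = 0 := by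
    intro q
    have h5 := integral_map (μ := ℙ) (φ := U q.1.1 q.1.2) (f := fun x : ℝ => x)
      (hUmeas _ _).aemeasurable measurable_id.aestronglyMeasurable
    exact h5.trans (hUmean _ _ q.2)
  -- the law of the U vector is the product measure
  have hA : Measure.map Uv ℙ = Measure.pi ν := by
    refine (Measure.pi_eq fun B hB => ?_).symm
    rw [Measure.map_apply hUv (MeasurableSet.univ_pi hB)]
    have hset : Uv ⁻¹' Set.pi Set.univ B = ⋂ q, U q.1.1 q.1.2 ⁻¹' B q := by
      ext ω
      simp [Uv, Set.mem_pi]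
    rw [hset, hUindep.meas_iInter (fun q => ⟨B q, hB q, rfl⟩)]
    exact Finset.prod_congr rfl fun q _ => (Measure.map_apply (hUmeas _ _) (hB q)).symm
  -- U vector is independent of X vector
  have hUXi : IndepFun Uv Xv ℙ := by
    have hr : Measurable (fun (u : Fin N × Fin N → ℝ)
        (q : {p : Fin N × Fin N // p.1 ≠ p.2}) => u q.1) :=
      measurable_pi_lambda _ fun q => measurable_pi_apply _
    exact hUXindep.comp hr measurable_id
  have hC2 : Measure.map (fun ω => (Uv ω, Xv ω)) ℙ = (Measure.map Uv ℙ).prod (Measure.map Xv ℙ) :=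
    (indepFun_iff_map_prod_eq_prod_map_map hUv.aemeasurable hXv.aemeasurable).mp hUXi
  set μX : Measure (Fin N × Fin N → ℝ) := Measure.map Xv ℙ with hμXdef
  haveI : IsProbabilityMeasure μX := Measure.isProbabilityMeasure_map hXv.aemeasurable
  haveI hT1 : ∀ q : {q : {p : Fin N × Fin N // p.1 ≠ p.2} // pp q},
      IsProbabilityMeasure (ν q.1) := fun q => hνP q.1
  haveI hS1 : ∀ q : {q : {p : Fin N × Fin N // p.1 ≠ p.2} // ¬ pp q},
      IsProbabilityMeasure (ν q.1) := fun q => hνP q.1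
  set πT : Measure ({q : {p : Fin N × Fin N // p.1 ≠ p.2} // pp q} → ℝ) :=
    Measure.pi (fun q => ν q.1) with hπTdef
  set πS : Measure ({q : {p : Fin N × Fin N // p.1 ≠ p.2} // ¬ pp q} → ℝ) :=
    Measure.pi (fun q => ν q.1) with hπSdef
  set φm := MeasurableEquiv.piEquivPiSubtypeProd
    (fun _ : {p : Fin N × Fin N // p.1 ≠ p.2} => ℝ) pp with hφmdef
  have hφ : MeasurePreserving φm (Measure.pi ν) (πT.prod πS) :=
    measurePreserving_piEquivPiSubtypeProd ν pp
  set Θ : Ω → (({q : {p : Fin N × Fin N // p.1 ≠ p.2} // pp q} → ℝ) ×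
      ({q : {p : Fin N × Fin N // p.1 ≠ p.2} // ¬ pp q} → ℝ)) × (Fin N × Fin N → ℝ) :=
    fun ω => (φm (Uv ω), Xv ω) with hΘdef
  have hΘm : Measurable Θ := (φm.measurable.comp hUv).prodMk hXv
  have hΘmap : Measure.map Θ ℙ = (πT.prod πS).prod μX := by
    have h1 : Measure.map Θ ℙ = (Measure.map (fun ω => (Uv ω, Xv ω)) ℙ).map (Prod.map φm id) := by
      rw [Measure.map_map (φm.measurable.prodMap measurable_id) (hUv.prodMk hXv)]
      rfl
    rw [h1, hC2, hA]
    exact (hφ.prod (MeasurePreserving.id μX)).map_eq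
  -- the two kernels expressed through Θ
  have hG1 : ∀ ω, sKer X U C ω = F1 pp C (Xv ω, (φm (Uv ω)).2) := by
    intro ω
    refine KK_congr fun a b haC hbC hab => ⟨rfl, ?_⟩
    have h2 : ¬ pp ⟨(a, b), hab⟩ := fun hp => hCS a b haC hbC hab hp
    rw [UAa_eval pp a b hab h2]
    rfl
  have hG2 : ∀ ω, sKer X U C' ω = F2 pp C' (Xv ω, (φm (Uv ω)).1) := by
    intro ω
    refine KK_congr fun a b haC hbC hab => ⟨rfl, ?_⟩
    have h2 : pp ⟨(a, b), hab⟩ := ⟨haC, hbC⟩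
    rw [UBb_eval pp a b hab h2]
    rfl
  -- integrability of the product
  have h1 := hL2 C hC
  have h2 := hL2 C' hC'
  have hIntΩ : Integrable (fun ω => sKer X U C ω * sKer X U C' ω) ℙ := by
    refine Integrable.mono' ((h1.integrable_sq.add h2.integrable_sq).div_const 2)
      (h1.aestronglyMeasurable.mul h2.aestronglyMeasurable)
      (Filter.Eventually.of_forall fun ω => ?_)
    simp only [Pi.add_apply]
    rw [Real.norm_eq_abs, abs_mul]
    nlinarith [sq_nonneg (|sKer X U C ω| - |sKer X U C' ω|), sq_abs (sKer X U C ω),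
      sq_abs (sKer X U C' ω), abs_nonneg (sKer X U C ω), abs_nonneg (sKer X U C' ω)]
  set Gf : (({q : {p : Fin N × Fin N // p.1 ≠ p.2} // pp q} → ℝ) ×
      ({q : {p : Fin N × Fin N // p.1 ≠ p.2} // ¬ pp q} → ℝ)) × (Fin N × Fin N → ℝ) → ℝ :=
    fun z => F1 pp C (z.2, z.1.2) * F2 pp C' (z.2, z.1.1) with hGfdef
  have hGm : Measurable Gf :=
    ((F1_measurable pp C).comp (measurable_snd.prodMk (measurable_snd.comp measurable_fst))).mul
      ((F2_measurable pp C').comp (measurable_snd.prodMk (measurable_fst.comp measurable_fst)))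
  have hcomp : ∀ ω, Gf (Θ ω) = sKer X U C ω * sKer X U C' ω := by
    intro ω
    rw [hG1 ω, hG2 ω]
  have hGM : Integrable Gf ((πT.prod πS).prod μX) := by
    rw [← hΘmap, integrable_map_measure hGm.aestronglyMeasurable hΘm.aemeasurable]
    exact hIntΩ.congr (Filter.Eventually.of_forall fun ω => (hcomp ω).symm)
  have hIeq : ∫ ω, sKer X U C ω * sKer X U C' ω ∂ℙ = ∫ z, Gf z ∂((πT.prod πS).prod μX) := by
    rw [← hΘmap, integral_map hΘm.aemeasurable hGm.aestronglyMeasurable]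
    exact integral_congr_ae (Filter.Eventually.of_forall fun ω => (hcomp ω).symm)
  rw [hIeq, integral_prod_symm _ hGM]
  have step2 : ∀ᵐ x ∂μX, ∫ ts, Gf (ts, x) ∂(πT.prod πS) = 0 := by
    filter_upwards [hGM.prod_left_ae] with x hx
    rw [integral_prod_symm _ hx]
    have s22 : ∀ᵐ s ∂πS, ∫ t, Gf ((t, s), x) ∂πT = 0 := by
      filter_upwards [hx.prod_left_ae] with s hs
      by_cases hc : F1 pp C (x, s) = 0
      · have hz : ∀ t, Gf ((t, s), x) = 0 := by
          intro t
          show F1 pp C (x, s) * F2 pp C' (x, t) = 0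
          rw [hc, zero_mul]
        rw [integral_congr_ae (Filter.Eventually.of_forall hz), integral_zero]
      · have hF2int : Integrable (fun t => F2 pp C' (x, t)) πT := by
          have h6 := hs.const_mul (F1 pp C (x, s))⁻¹
          refine h6.congr (Filter.Eventually.of_forall fun t => ?_)
          show (F1 pp C (x, s))⁻¹ * (F1 pp C (x, s) * F2 pp C' (x, t)) = F2 pp C' (x, t)
          rw [← mul_assoc, inv_mul_cancel₀ hc, one_mul]
        have h0 : ∫ t, F2 pp C' (x, t) ∂πT = 0 :=
          aux_L3 (fun q => ν q.1) (fun q => hmean' q.1) _ (F2_linear pp C' x) hF2int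
        have heq : ∫ t, Gf ((t, s), x) ∂πT
            = ∫ t, F1 pp C (x, s) * F2 pp C' (x, t) ∂πT := rfl
        rw [heq, integral_const_mul, h0, mul_zero]
    rw [integral_congr_ae s22, integral_zero]
  rw [integral_congr_ae step2, integral_zero]
end

section
/- Let X_{ij} = f(A_i, B_j) for i.i.d. random variables (A_i, B_i) and i.i.d. errors U_{ij} independent of everything else, mean zero. Then the conditional expectation of the kernel s_{ijkl} given (A_i, B_j, U_{ij}) equals (8/4!)·(X_{ij} - E[X_{ij} | A_i] - E[X_{ij} | B_j] + E[X_{ij}])·U_{ij}. -/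
open MeasureTheory ProbabilityTheory Finset

lemma aux_condexp_indepFun_integral {Ω δ ε : Type*} {m0 : MeasurableSpace Ω} {μ : Measure Ω}
    [IsProbabilityMeasure μ] [MeasurableSpace δ] [MeasurableSpace ε]
    {Z : Ω → δ} {Y : Ω → ε} (hZ : Measurable Z) (hY : Measurable Y)
    (hind : IndepFun Z Y μ) {φ : δ × ε → ℝ} (hφ : Measurable φ)
    (hint : Integrable (fun ω => φ (Z ω, Y ω)) μ) :
    μ[(fun ω => φ (Z ω, Y ω)) | MeasurableSpace.comap Z inferInstance] =ᵐ[μ]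
      fun ω => ∫ y, φ (Z ω, y) ∂(Measure.map Y μ) := by
  have hm : MeasurableSpace.comap Z inferInstance ≤ m0 := hZ.comap_le
  set ρ := Measure.map Z μ with hρ
  set ν := Measure.map Y μ with hν
  haveI : IsProbabilityMeasure ρ := Measure.isProbabilityMeasure_map hZ.aemeasurable
  haveI : IsProbabilityMeasure ν := Measure.isProbabilityMeasure_map hY.aemeasurable
  have hpair : Measurable (fun ω => (Z ω, Y ω)) := hZ.prodMk hY
  have hmap : Measure.map (fun ω => (Z ω, Y ω)) μ = ρ.prod ν :=
    (indepFun_iff_map_prod_eq_prod_map_map hZ.aemeasurable hY.aemeasurable).mp hind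
  have hφint : Integrable φ (ρ.prod ν) := by
    rw [← hmap, integrable_map_measure (by rw [hmap]; exact hφ.aestronglyMeasurable)
      hpair.aemeasurable]
    exact hint
  have hG : StronglyMeasurable (fun z => ∫ y, φ (z, y) ∂ν) :=
    hφ.stronglyMeasurable.integral_prod_right'
  have hGint : Integrable (fun z => ∫ y, φ (z, y) ∂ν) ρ := hφint.integral_prod_left
  have hgint : Integrable (fun ω => ∫ y, φ (Z ω, y) ∂ν) μ := by
    have := (integrable_map_measure hG.aestronglyMeasurable hZ.aemeasurable).mp hGint
    exact this
  refine (ae_eq_condExp_of_forall_setIntegral_eq hm hint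
    (fun s _ _ => hgint.integrableOn) ?_ ?_).symm
  · rintro s ⟨t, ht, rfl⟩ -
    have h1 : ∫ x in Z ⁻¹' t, (∫ y, φ (Z x, y) ∂ν) ∂μ = ∫ z in t, (∫ y, φ (z, y) ∂ν) ∂ρ :=
      (setIntegral_map ht hG.aestronglyMeasurable hZ.aemeasurable).symm
    have h2 : ∫ x in Z ⁻¹' t, φ (Z x, Y x) ∂μ = ∫ p in t ×ˢ Set.univ, φ p ∂(ρ.prod ν) := by
      rw [← hmap, setIntegral_map (ht.prod MeasurableSet.univ)
        (by rw [hmap]; exact hφ.aestronglyMeasurable) hpair.aemeasurable]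
      have : (fun ω => (Z ω, Y ω)) ⁻¹' (t ×ˢ Set.univ) = Z ⁻¹' t := by
        ext x; simp [Set.mem_prod]
      rw [this]
    rw [h1, h2, setIntegral_prod _ hφint.integrableOn]
    rw [Measure.restrict_univ]
  · refine StronglyMeasurable.aestronglyMeasurable ?_
    have hZ' : Measurable[MeasurableSpace.comap Z inferInstance] Z :=
      fun s hs => ⟨s, hs, rfl⟩
    exact hG.comp_measurable hZ'

lemma aux_condexp_mul_indep_zero' {Ω δ : Type*} {m : MeasurableSpace Ω}
    {m0 : MeasurableSpace Ω} {μ : Measure Ω}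
    [IsProbabilityMeasure μ] [MeasurableSpace δ] {W : Ω → δ} {V : Ω → ℝ} {g : δ → ℝ}
    (hW : Measurable W) (hV : Measurable V) (hg : Measurable g)
    (hind : IndepFun W V μ) (hintg : Integrable (fun ω => g (W ω) * V ω) μ)
    (hVmean : ∫ ω, V ω ∂μ = 0)
    (hm : m ≤ MeasurableSpace.comap W inferInstance) :
    μ[(fun ω => g (W ω) * V ω)|m] =ᵐ[μ] 0 := by
  have h1 := aux_condexp_indepFun_integral hW hV hind
    (φ := fun p => g p.1 * p.2) ((hg.comp measurable_fst).mul measurable_snd) hintg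
  have h2 : (fun ω => ∫ y, g (W ω) * y ∂(Measure.map V μ)) = fun _ : Ω => (0:ℝ) := by
    funext ω
    have hid : ∫ y : ℝ, y ∂(Measure.map V μ) = ∫ x, V x ∂μ :=
      integral_map hV.aemeasurable aestronglyMeasurable_id
    rw [integral_const_mul, hid, hVmean, mul_zero]
  rw [h2] at h1
  have h3 : μ[(fun ω => g (W ω) * V ω)|m]
      =ᵐ[μ] μ[μ[(fun ω => g (W ω) * V ω)|MeasurableSpace.comap W inferInstance]|m] :=
    (condExp_condExp_of_le hm hW.comap_le).symm
  refine h3.trans ((condExp_congr_ae h1).trans ?_)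
  rw [show (fun _ : Ω => (0:ℝ)) = (0 : Ω → ℝ) from rfl, condExp_zero]


lemma aux_ae_sum {Ω ι : Type*} [MeasurableSpace Ω] {μ : Measure Ω} (s : Finset ι)
    (f g : ι → Ω → ℝ) (h : ∀ n ∈ s, f n =ᵐ[μ] g n) :
    (∑ n ∈ s, f n) =ᵐ[μ] ∑ n ∈ s, g n := by
  classical
  induction s using Finset.induction_on with
  | empty => simp
  | insert _ _ hx ih =>
    rw [Finset.sum_insert hx, Finset.sum_insert hx]
    exact ((h _ (Finset.mem_insert_self _ _)).add
      (ih fun n hn => h n (Finset.mem_insert_of_mem hn)))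

lemma aux_condexp_comb16 {Ω : Type*} [m0 : MeasurableSpace Ω] {μ : Measure Ω}
    {m : MeasurableSpace Ω}
    (x u : Fin 4 → Ω → ℝ) (e : Fin 4 → Fin 4 → Ω → ℝ)
    (hint : ∀ a b, Integrable (fun ω => x a ω * u b ω) μ)
    (he : ∀ a b, μ[fun ω => x a ω * u b ω|m] =ᵐ[μ] e a b) :
    μ[fun ω => ((x 0 ω - x 1 ω) - (x 2 ω - x 3 ω)) * ((u 0 ω - u 1 ω) - (u 2 ω - u 3 ω))|m]
      =ᵐ[μ] fun ω =>
        (((e 0 0 ω - e 0 1 ω) - (e 0 2 ω - e 0 3 ω))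
          - ((e 1 0 ω - e 1 1 ω) - (e 1 2 ω - e 1 3 ω)))
        - (((e 2 0 ω - e 2 1 ω) - (e 2 2 ω - e 2 3 ω))
          - ((e 3 0 ω - e 3 1 ω) - (e 3 2 ω - e 3 3 ω))) := by
  let R : Fin 4 → Ω → ℝ := fun a =>
    ((fun ω => x a ω * u 0 ω) - fun ω => x a ω * u 1 ω)
      - ((fun ω => x a ω * u 2 ω) - fun ω => x a ω * u 3 ω)
  have hRint : ∀ a, Integrable (R a) μ :=
    fun a => ((hint a 0).sub (hint a 1)).sub ((hint a 2).sub (hint a 3))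
  have hrow : ∀ a, μ[R a|m] =ᵐ[μ] fun ω => (e a 0 ω - e a 1 ω) - (e a 2 ω - e a 3 ω) := by
    intro a
    have h01 := condExp_sub (μ := μ) (m := m) (hint a 0) (hint a 1)
    have h23 := condExp_sub (μ := μ) (m := m) (hint a 2) (hint a 3)
    have htop := condExp_sub (μ := μ) (m := m)
      (f := (fun ω => x a ω * u 0 ω) - fun ω => x a ω * u 1 ω)
      (g := (fun ω => x a ω * u 2 ω) - fun ω => x a ω * u 3 ω)
      ((hint a 0).sub (hint a 1)) ((hint a 2).sub (hint a 3))
    filter_upwards [h01, h23, htop, he a 0, he a 1, he a 2, he a 3] with ω q01 q23 qt k0 k1 k2 k3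
    simp only [Pi.sub_apply] at *
    rw [qt, q01, q23, k0, k1, k2, k3]
  have hEq : (fun ω => ((x 0 ω - x 1 ω) - (x 2 ω - x 3 ω))
      * ((u 0 ω - u 1 ω) - (u 2 ω - u 3 ω))) = (R 0 - R 1) - (R 2 - R 3) := by
    funext ω; simp only [R, Pi.sub_apply]; ring
  rw [hEq]
  have h01 := condExp_sub (μ := μ) (m := m) (hRint 0) (hRint 1)
  have h23 := condExp_sub (μ := μ) (m := m) (hRint 2) (hRint 3)
  have htop := condExp_sub (μ := μ) (m := m) (f := R 0 - R 1) (g := R 2 - R 3)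
    ((hRint 0).sub (hRint 1)) ((hRint 2).sub (hRint 3))
  filter_upwards [h01, h23, htop, hrow 0, hrow 1, hrow 2, hrow 3] with ω q01 q23 qt k0 k1 k2 k3
  simp only [Pi.sub_apply] at *
  rw [qt, q01, q23, k0, k1, k2, k3]

lemma aux_condexp_comb16e {Ω : Type*} {m : MeasurableSpace Ω}
    {m0 : MeasurableSpace Ω} {μ : Measure Ω}
    (x0 x1 x2 x3 u0 u1 u2 u3 : Ω → ℝ)
    (e00 e01 e02 e03 e10 e11 e12 e13 e20 e21 e22 e23 e30 e31 e32 e33 : Ω → ℝ)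
    (hi00 : Integrable (fun ω => x0 ω * u0 ω) μ)
    (hi01 : Integrable (fun ω => x0 ω * u1 ω) μ)
    (hi02 : Integrable (fun ω => x0 ω * u2 ω) μ)
    (hi03 : Integrable (fun ω => x0 ω * u3 ω) μ)
    (hi10 : Integrable (fun ω => x1 ω * u0 ω) μ)
    (hi11 : Integrable (fun ω => x1 ω * u1 ω) μ)
    (hi12 : Integrable (fun ω => x1 ω * u2 ω) μ)
    (hi13 : Integrable (fun ω => x1 ω * u3 ω) μ)
    (hi20 : Integrable (fun ω => x2 ω * u0 ω) μ)
    (hi21 : Integrable (fun ω => x2 ω * u1 ω) μ)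
    (hi22 : Integrable (fun ω => x2 ω * u2 ω) μ)
    (hi23 : Integrable (fun ω => x2 ω * u3 ω) μ)
    (hi30 : Integrable (fun ω => x3 ω * u0 ω) μ)
    (hi31 : Integrable (fun ω => x3 ω * u1 ω) μ)
    (hi32 : Integrable (fun ω => x3 ω * u2 ω) μ)
    (hi33 : Integrable (fun ω => x3 ω * u3 ω) μ)
    (he00 : μ[fun ω => x0 ω * u0 ω|m] =ᵐ[μ] e00)
    (he01 : μ[fun ω => x0 ω * u1 ω|m] =ᵐ[μ] e01)
    (he02 : μ[fun ω => x0 ω * u2 ω|m] =ᵐ[μ] e02)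
    (he03 : μ[fun ω => x0 ω * u3 ω|m] =ᵐ[μ] e03)
    (he10 : μ[fun ω => x1 ω * u0 ω|m] =ᵐ[μ] e10)
    (he11 : μ[fun ω => x1 ω * u1 ω|m] =ᵐ[μ] e11)
    (he12 : μ[fun ω => x1 ω * u2 ω|m] =ᵐ[μ] e12)
    (he13 : μ[fun ω => x1 ω * u3 ω|m] =ᵐ[μ] e13)
    (he20 : μ[fun ω => x2 ω * u0 ω|m] =ᵐ[μ] e20)
    (he21 : μ[fun ω => x2 ω * u1 ω|m] =ᵐ[μ] e21)
    (he22 : μ[fun ω => x2 ω * u2 ω|m] =ᵐ[μ] e22)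
    (he23 : μ[fun ω => x2 ω * u3 ω|m] =ᵐ[μ] e23)
    (he30 : μ[fun ω => x3 ω * u0 ω|m] =ᵐ[μ] e30)
    (he31 : μ[fun ω => x3 ω * u1 ω|m] =ᵐ[μ] e31)
    (he32 : μ[fun ω => x3 ω * u2 ω|m] =ᵐ[μ] e32)
    (he33 : μ[fun ω => x3 ω * u3 ω|m] =ᵐ[μ] e33)
    :
    μ[fun ω => ((x0 ω - x1 ω) - (x2 ω - x3 ω)) * ((u0 ω - u1 ω) - (u2 ω - u3 ω))|m]
      =ᵐ[μ] fun ω =>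
        (((e00 ω - e01 ω) - (e02 ω - e03 ω))
          - ((e10 ω - e11 ω) - (e12 ω - e13 ω)))
        - (((e20 ω - e21 ω) - (e22 ω - e23 ω))
          - ((e30 ω - e31 ω) - (e32 ω - e33 ω))) := by
  have h := aux_condexp_comb16 (μ := μ) (m := m) ![x0, x1, x2, x3] ![u0, u1, u2, u3]
    ![![e00, e01, e02, e03], ![e10, e11, e12, e13], ![e20, e21, e22, e23], ![e30, e31, e32, e33]]
    (by intro a b; fin_cases a <;> fin_cases b <;> assumption)
    (by intro a b; fin_cases a <;> fin_cases b <;> assumption)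
  exact h

lemma aux_condexp_sum24 {Ω : Type*} {m : MeasurableSpace Ω}
    {m0 : MeasurableSpace Ω} {μ : Measure Ω}
    (F1 F2 F3 F4 F5 F6 F7 F8 F9 F10 F11 F12 F13 F14 F15 F16 F17 F18 F19 F20 F21 F22 F23 F24 : Ω → ℝ)
    (V1 V2 V3 V4 V5 V6 V7 V8 V9 V10 V11 V12 V13 V14 V15 V16 V17 V18 V19 V20 V21 V22 V23 V24 : Ω → ℝ)
    (hi1 : Integrable F1 μ)
    (hi2 : Integrable F2 μ)
    (hi3 : Integrable F3 μ)
    (hi4 : Integrable F4 μ)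
    (hi5 : Integrable F5 μ)
    (hi6 : Integrable F6 μ)
    (hi7 : Integrable F7 μ)
    (hi8 : Integrable F8 μ)
    (hi9 : Integrable F9 μ)
    (hi10 : Integrable F10 μ)
    (hi11 : Integrable F11 μ)
    (hi12 : Integrable F12 μ)
    (hi13 : Integrable F13 μ)
    (hi14 : Integrable F14 μ)
    (hi15 : Integrable F15 μ)
    (hi16 : Integrable F16 μ)
    (hi17 : Integrable F17 μ)
    (hi18 : Integrable F18 μ)
    (hi19 : Integrable F19 μ)
    (hi20 : Integrable F20 μ)
    (hi21 : Integrable F21 μ)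
    (hi22 : Integrable F22 μ)
    (hi23 : Integrable F23 μ)
    (hi24 : Integrable F24 μ)
    (h1 : μ[F1|m] =ᵐ[μ] V1)
    (h2 : μ[F2|m] =ᵐ[μ] V2)
    (h3 : μ[F3|m] =ᵐ[μ] V3)
    (h4 : μ[F4|m] =ᵐ[μ] V4)
    (h5 : μ[F5|m] =ᵐ[μ] V5)
    (h6 : μ[F6|m] =ᵐ[μ] V6)
    (h7 : μ[F7|m] =ᵐ[μ] V7)
    (h8 : μ[F8|m] =ᵐ[μ] V8)
    (h9 : μ[F9|m] =ᵐ[μ] V9)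
    (h10 : μ[F10|m] =ᵐ[μ] V10)
    (h11 : μ[F11|m] =ᵐ[μ] V11)
    (h12 : μ[F12|m] =ᵐ[μ] V12)
    (h13 : μ[F13|m] =ᵐ[μ] V13)
    (h14 : μ[F14|m] =ᵐ[μ] V14)
    (h15 : μ[F15|m] =ᵐ[μ] V15)
    (h16 : μ[F16|m] =ᵐ[μ] V16)
    (h17 : μ[F17|m] =ᵐ[μ] V17)
    (h18 : μ[F18|m] =ᵐ[μ] V18)
    (h19 : μ[F19|m] =ᵐ[μ] V19)
    (h20 : μ[F20|m] =ᵐ[μ] V20)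
    (h21 : μ[F21|m] =ᵐ[μ] V21)
    (h22 : μ[F22|m] =ᵐ[μ] V22)
    (h23 : μ[F23|m] =ᵐ[μ] V23)
    (h24 : μ[F24|m] =ᵐ[μ] V24)
    :
    μ[fun ω => F1 ω + F2 ω + F3 ω + F4 ω + F5 ω + F6 ω + F7 ω + F8 ω + F9 ω + F10 ω + F11 ω + F12 ω + F13 ω + F14 ω + F15 ω + F16 ω + F17 ω + F18 ω + F19 ω + F20 ω + F21 ω + F22 ω + F23 ω + F24 ω|m] =ᵐ[μ] fun ω => V1 ω + V2 ω + V3 ω + V4 ω + V5 ω + V6 ω + V7 ω + V8 ω + V9 ω + V10 ω + V11 ω + V12 ω + V13 ω + V14 ω + V15 ω + V16 ω + V17 ω + V18 ω + V19 ω + V20 ω + V21 ω + V22 ω + V23 ω + V24 ω := by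
  have e1 : μ[fun ω => F1 ω|m] =ᵐ[μ] fun ω => V1 ω := h1
  have e2 : μ[fun ω => F1 ω + F2 ω|m] =ᵐ[μ] fun ω => V1 ω + V2 ω := by
    have hadd : μ[fun ω => F1 ω + F2 ω|m]
        =ᵐ[μ] μ[fun ω => F1 ω|m] + μ[F2|m] :=
      condExp_add (μ := μ) (m := m) (hi1) hi2
    filter_upwards [hadd, e1, h2] with ω w0 w1 w2
    rw [w0, Pi.add_apply, w1, w2]
  have e3 : μ[fun ω => F1 ω + F2 ω + F3 ω|m] =ᵐ[μ] fun ω => V1 ω + V2 ω + V3 ω := by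
    have hadd : μ[fun ω => F1 ω + F2 ω + F3 ω|m]
        =ᵐ[μ] μ[fun ω => F1 ω + F2 ω|m] + μ[F3|m] :=
      condExp_add (μ := μ) (m := m) ((hi1.add hi2)) hi3
    filter_upwards [hadd, e2, h3] with ω w0 w1 w2
    rw [w0, Pi.add_apply, w1, w2]
  have e4 : μ[fun ω => F1 ω + F2 ω + F3 ω + F4 ω|m] =ᵐ[μ] fun ω => V1 ω + V2 ω + V3 ω + V4 ω := by
    have hadd : μ[fun ω => F1 ω + F2 ω + F3 ω + F4 ω|m]
        =ᵐ[μ] μ[fun ω => F1 ω + F2 ω + F3 ω|m] + μ[F4|m] :=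
      condExp_add (μ := μ) (m := m) (((hi1.add hi2).add hi3)) hi4
    filter_upwards [hadd, e3, h4] with ω w0 w1 w2
    rw [w0, Pi.add_apply, w1, w2]
  have e5 : μ[fun ω => F1 ω + F2 ω + F3 ω + F4 ω + F5 ω|m] =ᵐ[μ] fun ω => V1 ω + V2 ω + V3 ω + V4 ω + V5 ω := by
    have hadd : μ[fun ω => F1 ω + F2 ω + F3 ω + F4 ω + F5 ω|m]
        =ᵐ[μ] μ[fun ω => F1 ω + F2 ω + F3 ω + F4 ω|m] + μ[F5|m] :=
      condExp_add (μ := μ) (m := m) ((((hi1.add hi2).add hi3).add hi4)) hi5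
    filter_upwards [hadd, e4, h5] with ω w0 w1 w2
    rw [w0, Pi.add_apply, w1, w2]
  have e6 : μ[fun ω => F1 ω + F2 ω + F3 ω + F4 ω + F5 ω + F6 ω|m] =ᵐ[μ] fun ω => V1 ω + V2 ω + V3 ω + V4 ω + V5 ω + V6 ω := by
    have hadd : μ[fun ω => F1 ω + F2 ω + F3 ω + F4 ω + F5 ω + F6 ω|m]
        =ᵐ[μ] μ[fun ω => F1 ω + F2 ω + F3 ω + F4 ω + F5 ω|m] + μ[F6|m] :=
      condExp_add (μ := μ) (m := m) (((((hi1.add hi2).add hi3).add hi4).add hi5)) hi6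
    filter_upwards [hadd, e5, h6] with ω w0 w1 w2
    rw [w0, Pi.add_apply, w1, w2]
  have e7 : μ[fun ω => F1 ω + F2 ω + F3 ω + F4 ω + F5 ω + F6 ω + F7 ω|m] =ᵐ[μ] fun ω => V1 ω + V2 ω + V3 ω + V4 ω + V5 ω + V6 ω + V7 ω := by
    have hadd : μ[fun ω => F1 ω + F2 ω + F3 ω + F4 ω + F5 ω + F6 ω + F7 ω|m]
        =ᵐ[μ] μ[fun ω => F1 ω + F2 ω + F3 ω + F4 ω + F5 ω + F6 ω|m] + μ[F7|m] :=
      condExp_add (μ := μ) (m := m) ((((((hi1.add hi2).add hi3).add hi4).add hi5).add hi6)) hi7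
    filter_upwards [hadd, e6, h7] with ω w0 w1 w2
    rw [w0, Pi.add_apply, w1, w2]
  have e8 : μ[fun ω => F1 ω + F2 ω + F3 ω + F4 ω + F5 ω + F6 ω + F7 ω + F8 ω|m] =ᵐ[μ] fun ω => V1 ω + V2 ω + V3 ω + V4 ω + V5 ω + V6 ω + V7 ω + V8 ω := by
    have hadd : μ[fun ω => F1 ω + F2 ω + F3 ω + F4 ω + F5 ω + F6 ω + F7 ω + F8 ω|m]
        =ᵐ[μ] μ[fun ω => F1 ω + F2 ω + F3 ω + F4 ω + F5 ω + F6 ω + F7 ω|m] + μ[F8|m] :=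
      condExp_add (μ := μ) (m := m) (((((((hi1.add hi2).add hi3).add hi4).add hi5).add hi6).add hi7)) hi8
    filter_upwards [hadd, e7, h8] with ω w0 w1 w2
    rw [w0, Pi.add_apply, w1, w2]
  have e9 : μ[fun ω => F1 ω + F2 ω + F3 ω + F4 ω + F5 ω + F6 ω + F7 ω + F8 ω + F9 ω|m] =ᵐ[μ] fun ω => V1 ω + V2 ω + V3 ω + V4 ω + V5 ω + V6 ω + V7 ω + V8 ω + V9 ω := by
    have hadd : μ[fun ω => F1 ω + F2 ω + F3 ω + F4 ω + F5 ω + F6 ω + F7 ω + F8 ω + F9 ω|m]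
        =ᵐ[μ] μ[fun ω => F1 ω + F2 ω + F3 ω + F4 ω + F5 ω + F6 ω + F7 ω + F8 ω|m] + μ[F9|m] :=
      condExp_add (μ := μ) (m := m) ((((((((hi1.add hi2).add hi3).add hi4).add hi5).add hi6).add hi7).add hi8)) hi9
    filter_upwards [hadd, e8, h9] with ω w0 w1 w2
    rw [w0, Pi.add_apply, w1, w2]
  have e10 : μ[fun ω => F1 ω + F2 ω + F3 ω + F4 ω + F5 ω + F6 ω + F7 ω + F8 ω + F9 ω + F10 ω|m] =ᵐ[μ] fun ω => V1 ω + V2 ω + V3 ω + V4 ω + V5 ω + V6 ω + V7 ω + V8 ω + V9 ω + V10 ω := by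
    have hadd : μ[fun ω => F1 ω + F2 ω + F3 ω + F4 ω + F5 ω + F6 ω + F7 ω + F8 ω + F9 ω + F10 ω|m]
        =ᵐ[μ] μ[fun ω => F1 ω + F2 ω + F3 ω + F4 ω + F5 ω + F6 ω + F7 ω + F8 ω + F9 ω|m] + μ[F10|m] :=
      condExp_add (μ := μ) (m := m) (((((((((hi1.add hi2).add hi3).add hi4).add hi5).add hi6).add hi7).add hi8).add hi9)) hi10
    filter_upwards [hadd, e9, h10] with ω w0 w1 w2
    rw [w0, Pi.add_apply, w1, w2]
  have e11 : μ[fun ω => F1 ω + F2 ω + F3 ω + F4 ω + F5 ω + F6 ω + F7 ω + F8 ω + F9 ω + F10 ω + F11 ω|m] =ᵐ[μ] fun ω => V1 ω + V2 ω + V3 ω + V4 ω + V5 ω + V6 ω + V7 ω + V8 ω + V9 ω + V10 ω + V11 ω := by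
    have hadd : μ[fun ω => F1 ω + F2 ω + F3 ω + F4 ω + F5 ω + F6 ω + F7 ω + F8 ω + F9 ω + F10 ω + F11 ω|m]
        =ᵐ[μ] μ[fun ω => F1 ω + F2 ω + F3 ω + F4 ω + F5 ω + F6 ω + F7 ω + F8 ω + F9 ω + F10 ω|m] + μ[F11|m] :=
      condExp_add (μ := μ) (m := m) ((((((((((hi1.add hi2).add hi3).add hi4).add hi5).add hi6).add hi7).add hi8).add hi9).add hi10)) hi11
    filter_upwards [hadd, e10, h11] with ω w0 w1 w2
    rw [w0, Pi.add_apply, w1, w2]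
  have e12 : μ[fun ω => F1 ω + F2 ω + F3 ω + F4 ω + F5 ω + F6 ω + F7 ω + F8 ω + F9 ω + F10 ω + F11 ω + F12 ω|m] =ᵐ[μ] fun ω => V1 ω + V2 ω + V3 ω + V4 ω + V5 ω + V6 ω + V7 ω + V8 ω + V9 ω + V10 ω + V11 ω + V12 ω := by
    have hadd : μ[fun ω => F1 ω + F2 ω + F3 ω + F4 ω + F5 ω + F6 ω + F7 ω + F8 ω + F9 ω + F10 ω + F11 ω + F12 ω|m]
        =ᵐ[μ] μ[fun ω => F1 ω + F2 ω + F3 ω + F4 ω + F5 ω + F6 ω + F7 ω + F8 ω + F9 ω + F10 ω + F11 ω|m] + μ[F12|m] :=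
      condExp_add (μ := μ) (m := m) (((((((((((hi1.add hi2).add hi3).add hi4).add hi5).add hi6).add hi7).add hi8).add hi9).add hi10).add hi11)) hi12
    filter_upwards [hadd, e11, h12] with ω w0 w1 w2
    rw [w0, Pi.add_apply, w1, w2]
  have e13 : μ[fun ω => F1 ω + F2 ω + F3 ω + F4 ω + F5 ω + F6 ω + F7 ω + F8 ω + F9 ω + F10 ω + F11 ω + F12 ω + F13 ω|m] =ᵐ[μ] fun ω => V1 ω + V2 ω + V3 ω + V4 ω + V5 ω + V6 ω + V7 ω + V8 ω + V9 ω + V10 ω + V11 ω + V12 ω + V13 ω := by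
    have hadd : μ[fun ω => F1 ω + F2 ω + F3 ω + F4 ω + F5 ω + F6 ω + F7 ω + F8 ω + F9 ω + F10 ω + F11 ω + F12 ω + F13 ω|m]
        =ᵐ[μ] μ[fun ω => F1 ω + F2 ω + F3 ω + F4 ω + F5 ω + F6 ω + F7 ω + F8 ω + F9 ω + F10 ω + F11 ω + F12 ω|m] + μ[F13|m] :=
      condExp_add (μ := μ) (m := m) ((((((((((((hi1.add hi2).add hi3).add hi4).add hi5).add hi6).add hi7).add hi8).add hi9).add hi10).add hi11).add hi12)) hi13
    filter_upwards [hadd, e12, h13] with ω w0 w1 w2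
    rw [w0, Pi.add_apply, w1, w2]
  have e14 : μ[fun ω => F1 ω + F2 ω + F3 ω + F4 ω + F5 ω + F6 ω + F7 ω + F8 ω + F9 ω + F10 ω + F11 ω + F12 ω + F13 ω + F14 ω|m] =ᵐ[μ] fun ω => V1 ω + V2 ω + V3 ω + V4 ω + V5 ω + V6 ω + V7 ω + V8 ω + V9 ω + V10 ω + V11 ω + V12 ω + V13 ω + V14 ω := by
    have hadd : μ[fun ω => F1 ω + F2 ω + F3 ω + F4 ω + F5 ω + F6 ω + F7 ω + F8 ω + F9 ω + F10 ω + F11 ω + F12 ω + F13 ω + F14 ω|m]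
        =ᵐ[μ] μ[fun ω => F1 ω + F2 ω + F3 ω + F4 ω + F5 ω + F6 ω + F7 ω + F8 ω + F9 ω + F10 ω + F11 ω + F12 ω + F13 ω|m] + μ[F14|m] :=
      condExp_add (μ := μ) (m := m) (((((((((((((hi1.add hi2).add hi3).add hi4).add hi5).add hi6).add hi7).add hi8).add hi9).add hi10).add hi11).add hi12).add hi13)) hi14
    filter_upwards [hadd, e13, h14] with ω w0 w1 w2
    rw [w0, Pi.add_apply, w1, w2]
  have e15 : μ[fun ω => F1 ω + F2 ω + F3 ω + F4 ω + F5 ω + F6 ω + F7 ω + F8 ω + F9 ω + F10 ω + F11 ω + F12 ω + F13 ω + F14 ω + F15 ω|m] =ᵐ[μ] fun ω => V1 ω + V2 ω + V3 ω + V4 ω + V5 ω + V6 ω + V7 ω + V8 ω + V9 ω + V10 ω + V11 ω + V12 ω + V13 ω + V14 ω + V15 ω := by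
    have hadd : μ[fun ω => F1 ω + F2 ω + F3 ω + F4 ω + F5 ω + F6 ω + F7 ω + F8 ω + F9 ω + F10 ω + F11 ω + F12 ω + F13 ω + F14 ω + F15 ω|m]
        =ᵐ[μ] μ[fun ω => F1 ω + F2 ω + F3 ω + F4 ω + F5 ω + F6 ω + F7 ω + F8 ω + F9 ω + F10 ω + F11 ω + F12 ω + F13 ω + F14 ω|m] + μ[F15|m] :=
      condExp_add (μ := μ) (m := m) ((((((((((((((hi1.add hi2).add hi3).add hi4).add hi5).add hi6).add hi7).add hi8).add hi9).add hi10).add hi11).add hi12).add hi13).add hi14)) hi15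
    filter_upwards [hadd, e14, h15] with ω w0 w1 w2
    rw [w0, Pi.add_apply, w1, w2]
  have e16 : μ[fun ω => F1 ω + F2 ω + F3 ω + F4 ω + F5 ω + F6 ω + F7 ω + F8 ω + F9 ω + F10 ω + F11 ω + F12 ω + F13 ω + F14 ω + F15 ω + F16 ω|m] =ᵐ[μ] fun ω => V1 ω + V2 ω + V3 ω + V4 ω + V5 ω + V6 ω + V7 ω + V8 ω + V9 ω + V10 ω + V11 ω + V12 ω + V13 ω + V14 ω + V15 ω + V16 ω := by
    have hadd : μ[fun ω => F1 ω + F2 ω + F3 ω + F4 ω + F5 ω + F6 ω + F7 ω + F8 ω + F9 ω + F10 ω + F11 ω + F12 ω + F13 ω + F14 ω + F15 ω + F16 ω|m]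
        =ᵐ[μ] μ[fun ω => F1 ω + F2 ω + F3 ω + F4 ω + F5 ω + F6 ω + F7 ω + F8 ω + F9 ω + F10 ω + F11 ω + F12 ω + F13 ω + F14 ω + F15 ω|m] + μ[F16|m] :=
      condExp_add (μ := μ) (m := m) (((((((((((((((hi1.add hi2).add hi3).add hi4).add hi5).add hi6).add hi7).add hi8).add hi9).add hi10).add hi11).add hi12).add hi13).add hi14).add hi15)) hi16
    filter_upwards [hadd, e15, h16] with ω w0 w1 w2
    rw [w0, Pi.add_apply, w1, w2]
  have e17 : μ[fun ω => F1 ω + F2 ω + F3 ω + F4 ω + F5 ω + F6 ω + F7 ω + F8 ω + F9 ω + F10 ω + F11 ω + F12 ω + F13 ω + F14 ω + F15 ω + F16 ω + F17 ω|m] =ᵐ[μ] fun ω => V1 ω + V2 ω + V3 ω + V4 ω + V5 ω + V6 ω + V7 ω + V8 ω + V9 ω + V10 ω + V11 ω + V12 ω + V13 ω + V14 ω + V15 ω + V16 ω + V17 ω := by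
    have hadd : μ[fun ω => F1 ω + F2 ω + F3 ω + F4 ω + F5 ω + F6 ω + F7 ω + F8 ω + F9 ω + F10 ω + F11 ω + F12 ω + F13 ω + F14 ω + F15 ω + F16 ω + F17 ω|m]
        =ᵐ[μ] μ[fun ω => F1 ω + F2 ω + F3 ω + F4 ω + F5 ω + F6 ω + F7 ω + F8 ω + F9 ω + F10 ω + F11 ω + F12 ω + F13 ω + F14 ω + F15 ω + F16 ω|m] + μ[F17|m] :=
      condExp_add (μ := μ) (m := m) ((((((((((((((((hi1.add hi2).add hi3).add hi4).add hi5).add hi6).add hi7).add hi8).add hi9).add hi10).add hi11).add hi12).add hi13).add hi14).add hi15).add hi16)) hi17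
    filter_upwards [hadd, e16, h17] with ω w0 w1 w2
    rw [w0, Pi.add_apply, w1, w2]
  have e18 : μ[fun ω => F1 ω + F2 ω + F3 ω + F4 ω + F5 ω + F6 ω + F7 ω + F8 ω + F9 ω + F10 ω + F11 ω + F12 ω + F13 ω + F14 ω + F15 ω + F16 ω + F17 ω + F18 ω|m] =ᵐ[μ] fun ω => V1 ω + V2 ω + V3 ω + V4 ω + V5 ω + V6 ω + V7 ω + V8 ω + V9 ω + V10 ω + V11 ω + V12 ω + V13 ω + V14 ω + V15 ω + V16 ω + V17 ω + V18 ω := by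
    have hadd : μ[fun ω => F1 ω + F2 ω + F3 ω + F4 ω + F5 ω + F6 ω + F7 ω + F8 ω + F9 ω + F10 ω + F11 ω + F12 ω + F13 ω + F14 ω + F15 ω + F16 ω + F17 ω + F18 ω|m]
        =ᵐ[μ] μ[fun ω => F1 ω + F2 ω + F3 ω + F4 ω + F5 ω + F6 ω + F7 ω + F8 ω + F9 ω + F10 ω + F11 ω + F12 ω + F13 ω + F14 ω + F15 ω + F16 ω + F17 ω|m] + μ[F18|m] :=
      condExp_add (μ := μ) (m := m) (((((((((((((((((hi1.add hi2).add hi3).add hi4).add hi5).add hi6).add hi7).add hi8).add hi9).add hi10).add hi11).add hi12).add hi13).add hi14).add hi15).add hi16).add hi17)) hi18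
    filter_upwards [hadd, e17, h18] with ω w0 w1 w2
    rw [w0, Pi.add_apply, w1, w2]
  have e19 : μ[fun ω => F1 ω + F2 ω + F3 ω + F4 ω + F5 ω + F6 ω + F7 ω + F8 ω + F9 ω + F10 ω + F11 ω + F12 ω + F13 ω + F14 ω + F15 ω + F16 ω + F17 ω + F18 ω + F19 ω|m] =ᵐ[μ] fun ω => V1 ω + V2 ω + V3 ω + V4 ω + V5 ω + V6 ω + V7 ω + V8 ω + V9 ω + V10 ω + V11 ω + V12 ω + V13 ω + V14 ω + V15 ω + V16 ω + V17 ω + V18 ω + V19 ω := by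
    have hadd : μ[fun ω => F1 ω + F2 ω + F3 ω + F4 ω + F5 ω + F6 ω + F7 ω + F8 ω + F9 ω + F10 ω + F11 ω + F12 ω + F13 ω + F14 ω + F15 ω + F16 ω + F17 ω + F18 ω + F19 ω|m]
        =ᵐ[μ] μ[fun ω => F1 ω + F2 ω + F3 ω + F4 ω + F5 ω + F6 ω + F7 ω + F8 ω + F9 ω + F10 ω + F11 ω + F12 ω + F13 ω + F14 ω + F15 ω + F16 ω + F17 ω + F18 ω|m] + μ[F19|m] :=
      condExp_add (μ := μ) (m := m) ((((((((((((((((((hi1.add hi2).add hi3).add hi4).add hi5).add hi6).add hi7).add hi8).add hi9).add hi10).add hi11).add hi12).add hi13).add hi14).add hi15).add hi16).add hi17).add hi18)) hi19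
    filter_upwards [hadd, e18, h19] with ω w0 w1 w2
    rw [w0, Pi.add_apply, w1, w2]
  have e20 : μ[fun ω => F1 ω + F2 ω + F3 ω + F4 ω + F5 ω + F6 ω + F7 ω + F8 ω + F9 ω + F10 ω + F11 ω + F12 ω + F13 ω + F14 ω + F15 ω + F16 ω + F17 ω + F18 ω + F19 ω + F20 ω|m] =ᵐ[μ] fun ω => V1 ω + V2 ω + V3 ω + V4 ω + V5 ω + V6 ω + V7 ω + V8 ω + V9 ω + V10 ω + V11 ω + V12 ω + V13 ω + V14 ω + V15 ω + V16 ω + V17 ω + V18 ω + V19 ω + V20 ω := by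
    have hadd : μ[fun ω => F1 ω + F2 ω + F3 ω + F4 ω + F5 ω + F6 ω + F7 ω + F8 ω + F9 ω + F10 ω + F11 ω + F12 ω + F13 ω + F14 ω + F15 ω + F16 ω + F17 ω + F18 ω + F19 ω + F20 ω|m]
        =ᵐ[μ] μ[fun ω => F1 ω + F2 ω + F3 ω + F4 ω + F5 ω + F6 ω + F7 ω + F8 ω + F9 ω + F10 ω + F11 ω + F12 ω + F13 ω + F14 ω + F15 ω + F16 ω + F17 ω + F18 ω + F19 ω|m] + μ[F20|m] :=
      condExp_add (μ := μ) (m := m) (((((((((((((((((((hi1.add hi2).add hi3).add hi4).add hi5).add hi6).add hi7).add hi8).add hi9).add hi10).add hi11).add hi12).add hi13).add hi14).add hi15).add hi16).add hi17).add hi18).add hi19)) hi20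
    filter_upwards [hadd, e19, h20] with ω w0 w1 w2
    rw [w0, Pi.add_apply, w1, w2]
  have e21 : μ[fun ω => F1 ω + F2 ω + F3 ω + F4 ω + F5 ω + F6 ω + F7 ω + F8 ω + F9 ω + F10 ω + F11 ω + F12 ω + F13 ω + F14 ω + F15 ω + F16 ω + F17 ω + F18 ω + F19 ω + F20 ω + F21 ω|m] =ᵐ[μ] fun ω => V1 ω + V2 ω + V3 ω + V4 ω + V5 ω + V6 ω + V7 ω + V8 ω + V9 ω + V10 ω + V11 ω + V12 ω + V13 ω + V14 ω + V15 ω + V16 ω + V17 ω + V18 ω + V19 ω + V20 ω + V21 ω := by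
    have hadd : μ[fun ω => F1 ω + F2 ω + F3 ω + F4 ω + F5 ω + F6 ω + F7 ω + F8 ω + F9 ω + F10 ω + F11 ω + F12 ω + F13 ω + F14 ω + F15 ω + F16 ω + F17 ω + F18 ω + F19 ω + F20 ω + F21 ω|m]
        =ᵐ[μ] μ[fun ω => F1 ω + F2 ω + F3 ω + F4 ω + F5 ω + F6 ω + F7 ω + F8 ω + F9 ω + F10 ω + F11 ω + F12 ω + F13 ω + F14 ω + F15 ω + F16 ω + F17 ω + F18 ω + F19 ω + F20 ω|m] + μ[F21|m] :=
      condExp_add (μ := μ) (m := m) ((((((((((((((((((((hi1.add hi2).add hi3).add hi4).add hi5).add hi6).add hi7).add hi8).add hi9).add hi10).add hi11).add hi12).add hi13).add hi14).add hi15).add hi16).add hi17).add hi18).add hi19).add hi20)) hi21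
    filter_upwards [hadd, e20, h21] with ω w0 w1 w2
    rw [w0, Pi.add_apply, w1, w2]
  have e22 : μ[fun ω => F1 ω + F2 ω + F3 ω + F4 ω + F5 ω + F6 ω + F7 ω + F8 ω + F9 ω + F10 ω + F11 ω + F12 ω + F13 ω + F14 ω + F15 ω + F16 ω + F17 ω + F18 ω + F19 ω + F20 ω + F21 ω + F22 ω|m] =ᵐ[μ] fun ω => V1 ω + V2 ω + V3 ω + V4 ω + V5 ω + V6 ω + V7 ω + V8 ω + V9 ω + V10 ω + V11 ω + V12 ω + V13 ω + V14 ω + V15 ω + V16 ω + V17 ω + V18 ω + V19 ω + V20 ω + V21 ω + V22 ω := by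
    have hadd : μ[fun ω => F1 ω + F2 ω + F3 ω + F4 ω + F5 ω + F6 ω + F7 ω + F8 ω + F9 ω + F10 ω + F11 ω + F12 ω + F13 ω + F14 ω + F15 ω + F16 ω + F17 ω + F18 ω + F19 ω + F20 ω + F21 ω + F22 ω|m]
        =ᵐ[μ] μ[fun ω => F1 ω + F2 ω + F3 ω + F4 ω + F5 ω + F6 ω + F7 ω + F8 ω + F9 ω + F10 ω + F11 ω + F12 ω + F13 ω + F14 ω + F15 ω + F16 ω + F17 ω + F18 ω + F19 ω + F20 ω + F21 ω|m] + μ[F22|m] :=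
      condExp_add (μ := μ) (m := m) (((((((((((((((((((((hi1.add hi2).add hi3).add hi4).add hi5).add hi6).add hi7).add hi8).add hi9).add hi10).add hi11).add hi12).add hi13).add hi14).add hi15).add hi16).add hi17).add hi18).add hi19).add hi20).add hi21)) hi22
    filter_upwards [hadd, e21, h22] with ω w0 w1 w2
    rw [w0, Pi.add_apply, w1, w2]
  have e23 : μ[fun ω => F1 ω + F2 ω + F3 ω + F4 ω + F5 ω + F6 ω + F7 ω + F8 ω + F9 ω + F10 ω + F11 ω + F12 ω + F13 ω + F14 ω + F15 ω + F16 ω + F17 ω + F18 ω + F19 ω + F20 ω + F21 ω + F22 ω + F23 ω|m] =ᵐ[μ] fun ω => V1 ω + V2 ω + V3 ω + V4 ω + V5 ω + V6 ω + V7 ω + V8 ω + V9 ω + V10 ω + V11 ω + V12 ω + V13 ω + V14 ω + V15 ω + V16 ω + V17 ω + V18 ω + V19 ω + V20 ω + V21 ω + V22 ω + V23 ω := by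
    have hadd : μ[fun ω => F1 ω + F2 ω + F3 ω + F4 ω + F5 ω + F6 ω + F7 ω + F8 ω + F9 ω + F10 ω + F11 ω + F12 ω + F13 ω + F14 ω + F15 ω + F16 ω + F17 ω + F18 ω + F19 ω + F20 ω + F21 ω + F22 ω + F23 ω|m]
        =ᵐ[μ] μ[fun ω => F1 ω + F2 ω + F3 ω + F4 ω + F5 ω + F6 ω + F7 ω + F8 ω + F9 ω + F10 ω + F11 ω + F12 ω + F13 ω + F14 ω + F15 ω + F16 ω + F17 ω + F18 ω + F19 ω + F20 ω + F21 ω + F22 ω|m] + μ[F23|m] :=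
      condExp_add (μ := μ) (m := m) ((((((((((((((((((((((hi1.add hi2).add hi3).add hi4).add hi5).add hi6).add hi7).add hi8).add hi9).add hi10).add hi11).add hi12).add hi13).add hi14).add hi15).add hi16).add hi17).add hi18).add hi19).add hi20).add hi21).add hi22)) hi23
    filter_upwards [hadd, e22, h23] with ω w0 w1 w2
    rw [w0, Pi.add_apply, w1, w2]
  have e24 : μ[fun ω => F1 ω + F2 ω + F3 ω + F4 ω + F5 ω + F6 ω + F7 ω + F8 ω + F9 ω + F10 ω + F11 ω + F12 ω + F13 ω + F14 ω + F15 ω + F16 ω + F17 ω + F18 ω + F19 ω + F20 ω + F21 ω + F22 ω + F23 ω + F24 ω|m] =ᵐ[μ] fun ω => V1 ω + V2 ω + V3 ω + V4 ω + V5 ω + V6 ω + V7 ω + V8 ω + V9 ω + V10 ω + V11 ω + V12 ω + V13 ω + V14 ω + V15 ω + V16 ω + V17 ω + V18 ω + V19 ω + V20 ω + V21 ω + V22 ω + V23 ω + V24 ω := by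
    have hadd : μ[fun ω => F1 ω + F2 ω + F3 ω + F4 ω + F5 ω + F6 ω + F7 ω + F8 ω + F9 ω + F10 ω + F11 ω + F12 ω + F13 ω + F14 ω + F15 ω + F16 ω + F17 ω + F18 ω + F19 ω + F20 ω + F21 ω + F22 ω + F23 ω + F24 ω|m]
        =ᵐ[μ] μ[fun ω => F1 ω + F2 ω + F3 ω + F4 ω + F5 ω + F6 ω + F7 ω + F8 ω + F9 ω + F10 ω + F11 ω + F12 ω + F13 ω + F14 ω + F15 ω + F16 ω + F17 ω + F18 ω + F19 ω + F20 ω + F21 ω + F22 ω + F23 ω|m] + μ[F24|m] :=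
      condExp_add (μ := μ) (m := m) (((((((((((((((((((((((hi1.add hi2).add hi3).add hi4).add hi5).add hi6).add hi7).add hi8).add hi9).add hi10).add hi11).add hi12).add hi13).add hi14).add hi15).add hi16).add hi17).add hi18).add hi19).add hi20).add hi21).add hi22).add hi23)) hi24
    filter_upwards [hadd, e23, h24] with ω w0 w1 w2
    rw [w0, Pi.add_apply, w1, w2]
  exact e24

/-- Index type collecting the `A_i`, the `B_j` and the `U_{ij}` (i ≠ j). -/
abbrev DyadIdx (N : ℕ) := (Fin N) ⊕ (Fin N) ⊕ {p : Fin N × Fin N // p.1 ≠ p.2}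

abbrev dyadType (α γ : Type) {N : ℕ} : DyadIdx N → Type :=
  Sum.elim (fun _ => α) (Sum.elim (fun _ => γ) (fun _ => ℝ))

def dyadMS (α γ : Type) [MeasurableSpace α] [MeasurableSpace γ] {N : ℕ} :
    ∀ t : DyadIdx N, MeasurableSpace (dyadType α γ t)
  | Sum.inl _ => inferInstanceAs (MeasurableSpace α)
  | Sum.inr (Sum.inl _) => inferInstanceAs (MeasurableSpace γ)
  | Sum.inr (Sum.inr _) => inferInstanceAs (MeasurableSpace ℝ)

def dyadFun {Ω : Type*} {α γ : Type} {N : ℕ} (A : Fin N → Ω → α) (B : Fin N → Ω → γ)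
    (U : Fin N → Fin N → Ω → ℝ) : ∀ t : DyadIdx N, Ω → dyadType α γ t
  | Sum.inl i => A i
  | Sum.inr (Sum.inl j) => B j
  | Sum.inr (Sum.inr p) => U p.1.1 p.1.2


set_option maxHeartbeats 2000000 in
theorem stmt10 {Ω : Type*} {α γ : Type} [MeasureSpace Ω] [IsProbabilityMeasure (ℙ : Measure Ω)]
    [MeasurableSpace α] [MeasurableSpace γ]
    {N : ℕ} (A : Fin N → Ω → α) (B : Fin N → Ω → γ) (f : α → γ → ℝ)
    (X U : Fin N → Fin N → Ω → ℝ)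
    (hX : ∀ a b, X a b = fun ω => f (A a ω) (B b ω))
    (hf : Measurable (fun p : α × γ => f p.1 p.2))
    (hAmeas : ∀ a, Measurable (A a)) (hBmeas : ∀ b, Measurable (B b))
    (hUmeas : ∀ a b, Measurable (U a b))
    -- all the A_i, B_j and U_{ij} are mutually independent
    (hindep : iIndepFun (m := dyadMS α γ) (dyadFun A B U) ℙ)
    -- the A_i are identically distributed, the B_j are identically distributed,
    -- and the U_{ij} are identically distributed
    (hAident : ∀ a a', IdentDistrib (A a) (A a') ℙ ℙ)
    (hBident : ∀ b b', IdentDistrib (B b) (B b') ℙ ℙ)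
    (hUident : ∀ p q : {p : Fin N × Fin N // p.1 ≠ p.2},
      IdentDistrib (U p.1.1 p.1.2) (U q.1.1 q.1.2) ℙ ℙ)
    -- errors are mean zero
    (hUmean : ∀ a b, a ≠ b → ∫ ω, U a b ω ∂ℙ = 0)
    (i j k l : Fin N)
    (hij : i ≠ j) (hik : i ≠ k) (hil : i ≠ l) (hjk : j ≠ k) (hjl : j ≠ l) (hkl : k ≠ l)
    -- integrability
    (hsint : Integrable (sKer X U ({i, j, k, l} : Finset (Fin N))) ℙ)
    (hXint : ∀ a b, Integrable (X a b) ℙ)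
    (hprodint : ∀ a b c d : Fin N, Integrable (fun ω => X a b ω * U c d ω) ℙ) :
    MeasureTheory.condExp
        (MeasurableSpace.comap (fun ω => (A i ω, B j ω, U i j ω)) inferInstance) ℙ
        (sKer X U ({i, j, k, l} : Finset (Fin N)))
      =ᵐ[ℙ] fun ω =>
        ((8 : ℝ) / (Nat.factorial 4 : ℝ)) *
          (X i j ω
            - MeasureTheory.condExp (MeasurableSpace.comap (A i) inferInstance) ℙ (X i j) ω
            - MeasureTheory.condExp (MeasurableSpace.comap (B j) inferInstance) ℙ (X i j) ω
            + ∫ ω', X i j ω' ∂ℙ) * U i j ω := by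
  classical
  letI : ∀ t : DyadIdx N, MeasurableSpace (dyadType α γ t) := dyadMS α γ
  set e0 : {p : Fin N × Fin N // p.1 ≠ p.2} := ⟨(i, j), hij⟩ with he0
  set S : Finset (DyadIdx N) :=
    {Sum.inl i, Sum.inl j, Sum.inl k, Sum.inl l,
     Sum.inr (Sum.inl i), Sum.inr (Sum.inl j), Sum.inr (Sum.inl k), Sum.inr (Sum.inl l),
     Sum.inr (Sum.inr e0)} with hS
  set S3 : Finset (DyadIdx N) :=
    {Sum.inl i, Sum.inr (Sum.inl j), Sum.inr (Sum.inr e0)} with hS3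
  set W : Ω → (∀ t : S, dyadType α γ t.1) := fun ω t => dyadFun A B U t.1 ω with hWdef
  have hXmeas : ∀ a b, Measurable (X a b) := fun a b => by
    rw [hX]; exact hf.comp ((hAmeas a).prodMk (hBmeas b))
  have hdmeas : ∀ t : DyadIdx N, Measurable (dyadFun A B U t) := by
    rintro (a | b | p)
    · exact hAmeas a
    · exact hBmeas b
    · exact hUmeas p.1.1 p.1.2
  have hTriple : Measurable (fun ω => (A i ω, B j ω, U i j ω)) :=
    (hAmeas i).prodMk ((hBmeas j).prodMk (hUmeas i j))
  have hWmeas : Measurable W := measurable_pi_lambda W (fun t => hdmeas t.1)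
  -- laws of the marginals (before introducing local σ-algebras)
  set νA : Measure α := Measure.map (A i) ℙ with hνA
  set νB : Measure γ := Measure.map (B j) ℙ with hνB
  have hmapB : ∀ q, Measure.map (B q) ℙ = νB := fun q => (hBident q j).map_eq
  have hmapA : ∀ p, Measure.map (A p) ℙ = νA := fun p => (hAident p i).map_eq
  have hpairlaw : ∀ p q, Measure.map (fun ω => (A p ω, B q ω)) ℙ = νA.prod νB := by
    intro p q
    have hI : IndepFun (A p) (B q) ℙ :=
      hindep.indepFun (show (Sum.inl p : DyadIdx N) ≠ Sum.inr (Sum.inl q) by simp)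
    rw [(indepFun_iff_map_prod_eq_prod_map_map (hAmeas p).aemeasurable
      (hBmeas q).aemeasurable).mp hI, hmapA p, hmapB q]
  have hEXaux : ∀ p q, ∫ ω', X p q ω' ∂ℙ = ∫ z, f z.1 z.2 ∂(νA.prod νB) := by
    intro p q
    rw [hX, ← hpairlaw p q,
      integral_map ((hAmeas p).prodMk (hBmeas q)).aemeasurable hf.aestronglyMeasurable]
  have hEX : ∀ p q, ∫ ω', X p q ω' ∂ℙ = ∫ ω', X i j ω' ∂ℙ := by
    intro p q; rw [hEXaux p q, hEXaux i j]
  have hcAchar : (MeasureTheory.condExp (MeasurableSpace.comap (A i) inferInstance) ℙ (X i j)) =ᵐ[ℙ] fun ω => ∫ y, f (A i ω) y ∂νB := by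
    have h3 := aux_condexp_indepFun_integral (hAmeas i) (hBmeas j)
      (hindep.indepFun (show (Sum.inl i : DyadIdx N) ≠ Sum.inr (Sum.inl j) by simp))
      (φ := fun p : α × γ => f p.1 p.2) hf (by simpa only [hX] using hXint i j)
    rw [hX, hνB]
    exact h3
  have hcBchar : (MeasureTheory.condExp (MeasurableSpace.comap (B j) inferInstance) ℙ (X i j)) =ᵐ[ℙ] fun ω => ∫ y, f y (B j ω) ∂νA := by
    have h3 := aux_condexp_indepFun_integral (hBmeas j) (hAmeas i)
      (hindep.indepFun (show (Sum.inr (Sum.inl j) : DyadIdx N) ≠ Sum.inl i by simp))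
      (φ := fun p : γ × α => f p.2 p.1)
      (hf.comp (measurable_snd.prodMk measurable_fst))
      (by simpa only [hX] using hXint i j)
    rw [hX, hνA]
    exact h3
  -- local σ-algebras
  set H : MeasurableSpace Ω := MeasurableSpace.comap W inferInstance with hH
  set G : MeasurableSpace Ω := MeasurableSpace.comap
    (fun ω => (A i ω, B j ω, U i j ω)) inferInstance with hG
  set R : Ω → ℝ := fun ω => (X i j ω - (MeasureTheory.condExp (MeasurableSpace.comap (A i) inferInstance) ℙ (X i j)) ω - (MeasureTheory.condExp (MeasurableSpace.comap (B j) inferInstance) ℙ (X i j)) ω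
    + (∫ ω', X i j ω' ∂ℙ)) * U i j ω with hR
  have hGle : G ≤ MeasureSpace.toMeasurableSpace := by
    rw [hG]; exact hTriple.comap_le
  have hHle : H ≤ MeasureSpace.toMeasurableSpace := by
    rw [hH]; exact hWmeas.comap_le
  have mAi : (Sum.inl i : DyadIdx N) ∈ S := by simp [hS]
  have mAj : (Sum.inl j : DyadIdx N) ∈ S := by simp [hS]
  have mAk : (Sum.inl k : DyadIdx N) ∈ S := by simp [hS]
  have mAl : (Sum.inl l : DyadIdx N) ∈ S := by simp [hS]
  have mBi : (Sum.inr (Sum.inl i) : DyadIdx N) ∈ S := by simp [hS]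
  have mBj : (Sum.inr (Sum.inl j) : DyadIdx N) ∈ S := by simp [hS]
  have mBk : (Sum.inr (Sum.inl k) : DyadIdx N) ∈ S := by simp [hS]
  have mBl : (Sum.inr (Sum.inl l) : DyadIdx N) ∈ S := by simp [hS]
  have mU : (Sum.inr (Sum.inr e0) : DyadIdx N) ∈ S := by simp [hS]
  have m3Ai : (Sum.inl i : DyadIdx N) ∈ S3 := by simp [hS3]
  have m3Bj : (Sum.inr (Sum.inl j) : DyadIdx N) ∈ S3 := by simp [hS3]
  have m3U : (Sum.inr (Sum.inr e0) : DyadIdx N) ∈ S3 := by simp [hS3]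
  have hdH : ∀ t, t ∈ S → Measurable[H] (dyadFun A B U t) := by
    intro t ht
    have h1 : Measurable[H] W := by rw [hH]; exact measurable_iff_comap_le.mpr le_rfl
    exact (measurable_pi_apply (⟨t, ht⟩ : {x // x ∈ S})).comp h1
  have hTripleH : Measurable[H] (fun ω => (A i ω, B j ω, U i j ω)) :=
    Measurable.prodMk (hdH _ mAi) (Measurable.prodMk (hdH _ mBj) (hdH _ mU))
  have hGleH : G ≤ H := by
    rw [hG]; rintro s ⟨t, ht, rfl⟩; exact hTripleH ht
  have htG : Measurable[G] (fun ω => (A i ω, B j ω, U i j ω)) := by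
    rw [hG]; exact measurable_iff_comap_le.mpr le_rfl
  have hUGmeas : Measurable[G] (U i j) := (measurable_snd.comp measurable_snd).comp htG
  have hUGsm : StronglyMeasurable[G] (U i j) := hUGmeas.stronglyMeasurable
  have hXijG : Measurable[G] (X i j) := by
    rw [hX]
    exact hf.comp ((measurable_fst.comp htG).prodMk
      (measurable_fst.comp (measurable_snd.comp htG)))
  have hUWindep : ∀ (r s : Fin N) (hrs : r ≠ s), ¬(r = i ∧ s = j) → IndepFun W (U r s) ℙ := by
    intro r s hrs hrij
    have hnot : (Sum.inr (Sum.inr ⟨(r, s), hrs⟩) : DyadIdx N) ∉ S := by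
      simp only [hS, he0, Finset.mem_insert, Finset.mem_singleton]
      push_neg
      refine ⟨by simp, by simp, by simp, by simp, by simp, by simp, by simp, by simp, ?_⟩
      simp only [ne_eq, Sum.inr.injEq, Subtype.mk.injEq, Prod.mk.injEq]
      exact fun h => hrij h
    have h := hindep.indepFun_finset S {Sum.inr (Sum.inr ⟨(r, s), hrs⟩)}
      (Finset.disjoint_singleton_right.mpr hnot) hdmeas
    exact h.comp measurable_id (measurable_pi_apply
      (⟨_, Finset.mem_singleton_self _⟩ :
        {x // x ∈ ({Sum.inr (Sum.inr ⟨(r, s), hrs⟩)} : Finset (DyadIdx N))}))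
  have hatom0 : ∀ (p q r s : Fin N), Sum.inl p ∈ S → Sum.inr (Sum.inl q) ∈ S → r ≠ s →
      ¬(r = i ∧ s = j) → ℙ[(fun ω => X p q ω * U r s ω)|G] =ᵐ[ℙ] 0 := by
    intro p q r s hp hq hrs hrij
    have hg : Measurable (fun w : (∀ t : S, dyadType α γ t.1) =>
        f (w ⟨Sum.inl p, hp⟩) (w ⟨Sum.inr (Sum.inl q), hq⟩)) :=
      hf.comp (Measurable.prodMk
        (measurable_pi_apply (⟨Sum.inl p, hp⟩ : {x // x ∈ S}))
        (measurable_pi_apply (⟨Sum.inr (Sum.inl q), hq⟩ : {x // x ∈ S})))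
    have h := aux_condexp_mul_indep_zero' (m := G) hWmeas (hUmeas r s) hg
      (hUWindep r s hrs hrij)
      (by have := hprodint p q r s; simp only [hX] at this; exact this) (hUmean r s hrs) hGleH
    have hfun : (fun ω => X p q ω * U r s ω)
        = fun ω => f (W ω ⟨Sum.inl p, hp⟩) (W ω ⟨Sum.inr (Sum.inl q), hq⟩) * U r s ω := by
      funext ω; simp only [hX]; rfl
    rw [hfun]; exact h
  have hpull : ∀ (YY : Ω → ℝ), Integrable YY ℙ → Integrable (fun ω => YY ω * U i j ω) ℙ →
      ℙ[(fun ω => YY ω * U i j ω)|G] =ᵐ[ℙ] fun ω => (ℙ[YY|G]) ω * U i j ω := by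
    intro YY hYint hYUint
    have hflip : (fun ω => YY ω * U i j ω) = fun ω => U i j ω * YY ω := by
      funext ω; ring
    rw [hflip]
    have hUY : Integrable (fun ω => U i j ω * YY ω) ℙ := by rwa [hflip] at hYUint
    have h := condExp_mul_of_stronglyMeasurable_left (μ := ℙ) (m := G) hUGsm hUY hYint
    refine h.trans (Filter.Eventually.of_forall fun ω => ?_)
    simp only [Pi.mul_apply]; ring
  have hφ3 : Measurable (fun w : (∀ t : S3, dyadType α γ t.1) =>
      (w ⟨Sum.inl i, m3Ai⟩, w ⟨Sum.inr (Sum.inl j), m3Bj⟩, w ⟨Sum.inr (Sum.inr e0), m3U⟩)) :=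
    Measurable.prodMk (measurable_pi_apply (⟨Sum.inl i, m3Ai⟩ : {x // x ∈ S3}))
      (Measurable.prodMk
        (measurable_pi_apply (⟨Sum.inr (Sum.inl j), m3Bj⟩ : {x // x ∈ S3}))
        (measurable_pi_apply (⟨Sum.inr (Sum.inr e0), m3U⟩ : {x // x ∈ S3})))
  have hTindep : ∀ t : DyadIdx N, t ∉ S3 → IndepFun
      (fun ω => (A i ω, B j ω, U i j ω)) (dyadFun A B U t) ℙ := by
    intro t ht
    have h := hindep.indepFun_finset S3 {t} (Finset.disjoint_singleton_right.mpr ht) hdmeas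
    exact h.comp hφ3 (measurable_pi_apply
      (⟨t, Finset.mem_singleton_self t⟩ : {x // x ∈ ({t} : Finset (DyadIdx N))}))
  have hatom1 : ℙ[(fun ω => X i j ω * U i j ω)|G] =ᵐ[ℙ] fun ω => X i j ω * U i j ω := by
    have hsm : StronglyMeasurable[G] (fun ω => X i j ω * U i j ω) :=
      (hXijG.mul hUGmeas).stronglyMeasurable
    rw [condExp_of_stronglyMeasurable hGle hsm (hprodint i j i j)]
  have hatom2 : ∀ q, q ≠ j → ℙ[(fun ω => X i q ω * U i j ω)|G] =ᵐ[ℙ]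
      fun ω => (MeasureTheory.condExp (MeasurableSpace.comap (A i) inferInstance) ℙ (X i j)) ω * U i j ω := by
    intro q hqj
    have hnot : (Sum.inr (Sum.inl q) : DyadIdx N) ∉ S3 := by
      simp [hS3, he0, hqj]
    have hTq : IndepFun (fun ω => (A i ω, B j ω, U i j ω)) (B q) ℙ := hTindep _ hnot
    have h2 := aux_condexp_indepFun_integral hTriple (hBmeas q) hTq
      (φ := fun p : (α × γ × ℝ) × γ => f p.1.1 p.2)
      (hf.comp ((measurable_fst.comp measurable_fst).prodMk measurable_snd))
      (by simpa only [hX] using hXint i q)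
    rw [hmapB q] at h2
    have hq2 : ℙ[X i q|G] =ᵐ[ℙ] fun ω => ∫ y, f (A i ω) y ∂νB := by
      calc ℙ[X i q|G] = ℙ[(fun ω => f (A i ω) (B q ω))|G] := by rw [hX]
        _ =ᵐ[ℙ] _ := by rw [hG]; exact h2
    refine (hpull (X i q) (hXint i q) (hprodint i q i j)).trans ?_
    filter_upwards [hq2, hcAchar] with ω w2 w3
    rw [w2, w3]
  have hatom3 : ∀ p, p ≠ i → ℙ[(fun ω => X p j ω * U i j ω)|G] =ᵐ[ℙ]
      fun ω => (MeasureTheory.condExp (MeasurableSpace.comap (B j) inferInstance) ℙ (X i j)) ω * U i j ω := by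
    intro p hpi
    have hnot : (Sum.inl p : DyadIdx N) ∉ S3 := by simp [hS3, hpi]
    have hTp := hTindep _ hnot
    have h2 := aux_condexp_indepFun_integral hTriple (hAmeas p) hTp
      (φ := fun pr : (α × γ × ℝ) × α => f pr.2 pr.1.2.1)
      (hf.comp (measurable_snd.prodMk
        (measurable_fst.comp (measurable_snd.comp measurable_fst))))
      (by simpa only [hX] using hXint p j)
    rw [hmapA p] at h2
    have hq2 : ℙ[X p j|G] =ᵐ[ℙ] fun ω => ∫ y, f y (B j ω) ∂νA := by
      calc ℙ[X p j|G] = ℙ[(fun ω => f (A p ω) (B j ω))|G] := by rw [hX]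
        _ =ᵐ[ℙ] _ := by rw [hG]; exact h2
    refine (hpull (X p j) (hXint p j) (hprodint p j i j)).trans ?_
    filter_upwards [hq2, hcBchar] with ω w2 w3
    rw [w2, w3]
  have hatom4 : ∀ p q, p ≠ i → q ≠ j → ℙ[(fun ω => X p q ω * U i j ω)|G] =ᵐ[ℙ]
      fun ω => (∫ ω', X i j ω' ∂ℙ) * U i j ω := by
    intro p q hpi hqj
    have hdisj : Disjoint ({Sum.inl p, Sum.inr (Sum.inl q)} : Finset (DyadIdx N)) S3 := by
      rw [Finset.disjoint_left]
      intro t ht ht3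
      simp only [Finset.mem_insert, Finset.mem_singleton] at ht
      rcases ht with rfl | rfl <;> simp [hS3, he0, hpi, hqj] at ht3
    have hpq : IndepFun (fun ω => (A p ω, B q ω)) (fun ω => (A i ω, B j ω, U i j ω)) ℙ := by
      have h := hindep.indepFun_finset {Sum.inl p, Sum.inr (Sum.inl q)} S3 hdisj hdmeas
      have hmp : (Sum.inl p : DyadIdx N)
          ∈ ({Sum.inl p, Sum.inr (Sum.inl q)} : Finset (DyadIdx N)) := by simp
      have hmq : (Sum.inr (Sum.inl q) : DyadIdx N)
          ∈ ({Sum.inl p, Sum.inr (Sum.inl q)} : Finset (DyadIdx N)) := by simp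
      exact h.comp (Measurable.prodMk
        (measurable_pi_apply (⟨Sum.inl p, hmp⟩ :
          {x // x ∈ ({Sum.inl p, Sum.inr (Sum.inl q)} : Finset (DyadIdx N))}))
        (measurable_pi_apply (⟨Sum.inr (Sum.inl q), hmq⟩ :
          {x // x ∈ ({Sum.inl p, Sum.inr (Sum.inl q)} : Finset (DyadIdx N))}))) hφ3
    have hsm : StronglyMeasurable[MeasurableSpace.comap
        (fun ω => (A p ω, B q ω)) inferInstance] (X p q) := by
      rw [hX]
      exact (hf.comp (measurable_iff_comap_le.mpr le_rfl)).stronglyMeasurable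
    have h2 : ℙ[X p q|G] =ᵐ[ℙ] fun _ => ∫ ω', X p q ω' ∂ℙ := by
      rw [hG]
      exact condExp_indep_eq ((hAmeas p).prodMk (hBmeas q)).comap_le hTriple.comap_le hsm hpq
    refine (hpull (X p q) (hXint p q) (hprodint p q i j)).trans ?_
    filter_upwards [h2] with ω w2
    rw [w2, hEX p q]
  have hFint : ∀ a b c d, Integrable (fun ω =>
      ((X a b ω - X a c ω) - (X d b ω - X d c ω)) *
        ((U a b ω - U a c ω) - (U d b ω - U d c ω))) ℙ := by
    intro a b c d
    have hEq : (fun ω => ((X a b ω - X a c ω) - (X d b ω - X d c ω)) *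
        ((U a b ω - U a c ω) - (U d b ω - U d c ω)))
        = fun ω =>
        (((X a b ω * U a b ω - X a b ω * U a c ω) - (X a b ω * U d b ω - X a b ω * U d c ω))
        - ((X a c ω * U a b ω - X a c ω * U a c ω) - (X a c ω * U d b ω - X a c ω * U d c ω)))
        - (((X d b ω * U a b ω - X d b ω * U a c ω) - (X d b ω * U d b ω - X d b ω * U d c ω))
        - ((X d c ω * U a b ω - X d c ω * U a c ω)
            - (X d c ω * U d b ω - X d c ω * U d c ω))) := by
      funext ω; ring
    rw [hEq]
    exact ((((hprodint a b a b).sub (hprodint a b a c)).sub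
        ((hprodint a b d b).sub (hprodint a b d c))).sub
      (((hprodint a c a b).sub (hprodint a c a c)).sub
        ((hprodint a c d b).sub (hprodint a c d c)))).sub
      ((((hprodint d b a b).sub (hprodint d b a c)).sub
        ((hprodint d b d b).sub (hprodint d b d c))).sub
      (((hprodint d c a b).sub (hprodint d c a c)).sub
        ((hprodint d c d b).sub (hprodint d c d c))))
  have hsh0 : ∀ a b c d : Fin N, Sum.inl a ∈ S → Sum.inl d ∈ S →
      Sum.inr (Sum.inl b) ∈ S → Sum.inr (Sum.inl c) ∈ S →
      a ≠ b → a ≠ c → d ≠ b → d ≠ c →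
      ¬(a = i ∧ b = j) → ¬(a = i ∧ c = j) → ¬(d = i ∧ b = j) → ¬(d = i ∧ c = j) →
      ℙ[(fun ω => ((X a b ω - X a c ω) - (X d b ω - X d c ω)) * ((U a b ω - U a c ω) - (U d b ω - U d c ω)))|G] =ᵐ[ℙ] 0 := by
    intro a b c d ha hd hb hc hab hac hdb hdc hnab hnac hndb hndc
    have h := aux_condexp_comb16e (m := G) (μ := ℙ)
      (X a b) (X a c) (X d b) (X d c) (U a b) (U a c) (U d b) (U d c)
      0 0 0 0 0 0 0 0 0 0 0 0 0 0 0 0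
      (hprodint a b a b) (hprodint a b a c) (hprodint a b d b) (hprodint a b d c) (hprodint a c a b) (hprodint a c a c) (hprodint a c d b) (hprodint a c d c) (hprodint d b a b) (hprodint d b a c) (hprodint d b d b) (hprodint d b d c) (hprodint d c a b) (hprodint d c a c) (hprodint d c d b) (hprodint d c d c)
      (hatom0 a b a b ha hb hab hnab)
      (hatom0 a b a c ha hb hac hnac)
      (hatom0 a b d b ha hb hdb hndb)
      (hatom0 a b d c ha hb hdc hndc)
      (hatom0 a c a b ha hc hab hnab)
      (hatom0 a c a c ha hc hac hnac)
      (hatom0 a c d b ha hc hdb hndb)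
      (hatom0 a c d c ha hc hdc hndc)
      (hatom0 d b a b hd hb hab hnab)
      (hatom0 d b a c hd hb hac hnac)
      (hatom0 d b d b hd hb hdb hndb)
      (hatom0 d b d c hd hb hdc hndc)
      (hatom0 d c a b hd hc hab hnab)
      (hatom0 d c a c hd hc hac hnac)
      (hatom0 d c d b hd hc hdb hndb)
      (hatom0 d c d c hd hc hdc hndc)
    refine h.trans (Filter.Eventually.of_forall fun ω => ?_)
    simp
  have hsh1 : ∀ c d : Fin N, Sum.inr (Sum.inl c) ∈ S → Sum.inl d ∈ S → c ≠ j → d ≠ i → i ≠ c → d ≠ j → d ≠ c →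
      ℙ[(fun ω => ((X i j ω - X i c ω) - (X d j ω - X d c ω)) * ((U i j ω - U i c ω) - (U d j ω - U d c ω)))|G] =ᵐ[ℙ] R := by
    intro c d hc hd hcj hdi hic hdj hdc
    have h := aux_condexp_comb16e (m := G) (μ := ℙ)
      (X i j) (X i c) (X d j) (X d c)
      (U i j) (U i c) (U d j) (U d c)
      (fun ω => X i j ω * U i j ω)
      0
      0
      0
      (fun ω => (MeasureTheory.condExp (MeasurableSpace.comap (A i) inferInstance) ℙ (X i j)) ω * U i j ω)
      0
      0
      0
      (fun ω => (MeasureTheory.condExp (MeasurableSpace.comap (B j) inferInstance) ℙ (X i j)) ω * U i j ω)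
      0
      0
      0
      (fun ω => (∫ ω', X i j ω' ∂ℙ) * U i j ω)
      0
      0
      0
      (hprodint i j i j) (hprodint i j i c) (hprodint i j d j) (hprodint i j d c) (hprodint i c i j) (hprodint i c i c) (hprodint i c d j) (hprodint i c d c) (hprodint d j i j) (hprodint d j i c) (hprodint d j d j) (hprodint d j d c) (hprodint d c i j) (hprodint d c i c) (hprodint d c d j) (hprodint d c d c)
      hatom1
      (hatom0 i j i c mAi mBj hic (fun h => hcj h.2))
      (hatom0 i j d j mAi mBj hdj (fun h => hdi h.1))
      (hatom0 i j d c mAi mBj hdc (fun h => hdi h.1))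
      (hatom2 c hcj)
      (hatom0 i c i c mAi hc hic (fun h => hcj h.2))
      (hatom0 i c d j mAi hc hdj (fun h => hdi h.1))
      (hatom0 i c d c mAi hc hdc (fun h => hdi h.1))
      (hatom3 d hdi)
      (hatom0 d j i c hd mBj hic (fun h => hcj h.2))
      (hatom0 d j d j hd mBj hdj (fun h => hdi h.1))
      (hatom0 d j d c hd mBj hdc (fun h => hdi h.1))
      (hatom4 d c hdi hcj)
      (hatom0 d c i c hd hc hic (fun h => hcj h.2))
      (hatom0 d c d j hd hc hdj (fun h => hdi h.1))
      (hatom0 d c d c hd hc hdc (fun h => hdi h.1))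
    refine h.trans (Filter.Eventually.of_forall fun ω => ?_)
    simp only [hR, Pi.zero_apply]
    ring
  have hsh2 : ∀ b d : Fin N, Sum.inr (Sum.inl b) ∈ S → Sum.inl d ∈ S → b ≠ j → d ≠ i → i ≠ b → d ≠ b → d ≠ j →
      ℙ[(fun ω => ((X i b ω - X i j ω) - (X d b ω - X d j ω)) * ((U i b ω - U i j ω) - (U d b ω - U d j ω)))|G] =ᵐ[ℙ] R := by
    intro b d hb hd hbj hdi hib hdb hdj
    have h := aux_condexp_comb16e (m := G) (μ := ℙ)
      (X i b) (X i j) (X d b) (X d j)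
      (U i b) (U i j) (U d b) (U d j)
      0
      (fun ω => (MeasureTheory.condExp (MeasurableSpace.comap (A i) inferInstance) ℙ (X i j)) ω * U i j ω)
      0
      0
      0
      (fun ω => X i j ω * U i j ω)
      0
      0
      0
      (fun ω => (∫ ω', X i j ω' ∂ℙ) * U i j ω)
      0
      0
      0
      (fun ω => (MeasureTheory.condExp (MeasurableSpace.comap (B j) inferInstance) ℙ (X i j)) ω * U i j ω)
      0
      0
      (hprodint i b i b) (hprodint i b i j) (hprodint i b d b) (hprodint i b d j) (hprodint i j i b) (hprodint i j i j) (hprodint i j d b) (hprodint i j d j) (hprodint d b i b) (hprodint d b i j) (hprodint d b d b) (hprodint d b d j) (hprodint d j i b) (hprodint d j i j) (hprodint d j d b) (hprodint d j d j)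
      (hatom0 i b i b mAi hb hib (fun h => hbj h.2))
      (hatom2 b hbj)
      (hatom0 i b d b mAi hb hdb (fun h => hdi h.1))
      (hatom0 i b d j mAi hb hdj (fun h => hdi h.1))
      (hatom0 i j i b mAi mBj hib (fun h => hbj h.2))
      hatom1
      (hatom0 i j d b mAi mBj hdb (fun h => hdi h.1))
      (hatom0 i j d j mAi mBj hdj (fun h => hdi h.1))
      (hatom0 d b i b hd hb hib (fun h => hbj h.2))
      (hatom4 d b hdi hbj)
      (hatom0 d b d b hd hb hdb (fun h => hdi h.1))
      (hatom0 d b d j hd hb hdj (fun h => hdi h.1))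
      (hatom0 d j i b hd mBj hib (fun h => hbj h.2))
      (hatom3 d hdi)
      (hatom0 d j d b hd mBj hdb (fun h => hdi h.1))
      (hatom0 d j d j hd mBj hdj (fun h => hdi h.1))
    refine h.trans (Filter.Eventually.of_forall fun ω => ?_)
    simp only [hR, Pi.zero_apply]
    ring
  have hsh3 : ∀ a c : Fin N, Sum.inl a ∈ S → Sum.inr (Sum.inl c) ∈ S → a ≠ i → c ≠ j → a ≠ j → a ≠ c → i ≠ c →
      ℙ[(fun ω => ((X a j ω - X a c ω) - (X i j ω - X i c ω)) * ((U a j ω - U a c ω) - (U i j ω - U i c ω)))|G] =ᵐ[ℙ] R := by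
    intro a c ha hc hai hcj haj hac hic
    have h := aux_condexp_comb16e (m := G) (μ := ℙ)
      (X a j) (X a c) (X i j) (X i c)
      (U a j) (U a c) (U i j) (U i c)
      0
      0
      (fun ω => (MeasureTheory.condExp (MeasurableSpace.comap (B j) inferInstance) ℙ (X i j)) ω * U i j ω)
      0
      0
      0
      (fun ω => (∫ ω', X i j ω' ∂ℙ) * U i j ω)
      0
      0
      0
      (fun ω => X i j ω * U i j ω)
      0
      0
      0
      (fun ω => (MeasureTheory.condExp (MeasurableSpace.comap (A i) inferInstance) ℙ (X i j)) ω * U i j ω)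
      0
      (hprodint a j a j) (hprodint a j a c) (hprodint a j i j) (hprodint a j i c) (hprodint a c a j) (hprodint a c a c) (hprodint a c i j) (hprodint a c i c) (hprodint i j a j) (hprodint i j a c) (hprodint i j i j) (hprodint i j i c) (hprodint i c a j) (hprodint i c a c) (hprodint i c i j) (hprodint i c i c)
      (hatom0 a j a j ha mBj haj (fun h => hai h.1))
      (hatom0 a j a c ha mBj hac (fun h => hai h.1))
      (hatom3 a hai)
      (hatom0 a j i c ha mBj hic (fun h => hcj h.2))
      (hatom0 a c a j ha hc haj (fun h => hai h.1))
      (hatom0 a c a c ha hc hac (fun h => hai h.1))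
      (hatom4 a c hai hcj)
      (hatom0 a c i c ha hc hic (fun h => hcj h.2))
      (hatom0 i j a j mAi mBj haj (fun h => hai h.1))
      (hatom0 i j a c mAi mBj hac (fun h => hai h.1))
      hatom1
      (hatom0 i j i c mAi mBj hic (fun h => hcj h.2))
      (hatom0 i c a j mAi hc haj (fun h => hai h.1))
      (hatom0 i c a c mAi hc hac (fun h => hai h.1))
      (hatom2 c hcj)
      (hatom0 i c i c mAi hc hic (fun h => hcj h.2))
    refine h.trans (Filter.Eventually.of_forall fun ω => ?_)
    simp only [hR, Pi.zero_apply]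
    ring
  have hsh4 : ∀ a b : Fin N, Sum.inl a ∈ S → Sum.inr (Sum.inl b) ∈ S → a ≠ i → b ≠ j → a ≠ b → a ≠ j → i ≠ b →
      ℙ[(fun ω => ((X a b ω - X a j ω) - (X i b ω - X i j ω)) * ((U a b ω - U a j ω) - (U i b ω - U i j ω)))|G] =ᵐ[ℙ] R := by
    intro a b ha hb hai hbj hab haj hib
    have h := aux_condexp_comb16e (m := G) (μ := ℙ)
      (X a b) (X a j) (X i b) (X i j)
      (U a b) (U a j) (U i b) (U i j)
      0
      0
      0
      (fun ω => (∫ ω', X i j ω' ∂ℙ) * U i j ω)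
      0
      0
      0
      (fun ω => (MeasureTheory.condExp (MeasurableSpace.comap (B j) inferInstance) ℙ (X i j)) ω * U i j ω)
      0
      0
      0
      (fun ω => (MeasureTheory.condExp (MeasurableSpace.comap (A i) inferInstance) ℙ (X i j)) ω * U i j ω)
      0
      0
      0
      (fun ω => X i j ω * U i j ω)
      (hprodint a b a b) (hprodint a b a j) (hprodint a b i b) (hprodint a b i j) (hprodint a j a b) (hprodint a j a j) (hprodint a j i b) (hprodint a j i j) (hprodint i b a b) (hprodint i b a j) (hprodint i b i b) (hprodint i b i j) (hprodint i j a b) (hprodint i j a j) (hprodint i j i b) (hprodint i j i j)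
      (hatom0 a b a b ha hb hab (fun h => hai h.1))
      (hatom0 a b a j ha hb haj (fun h => hai h.1))
      (hatom0 a b i b ha hb hib (fun h => hbj h.2))
      (hatom4 a b hai hbj)
      (hatom0 a j a b ha mBj hab (fun h => hai h.1))
      (hatom0 a j a j ha mBj haj (fun h => hai h.1))
      (hatom0 a j i b ha mBj hib (fun h => hbj h.2))
      (hatom3 a hai)
      (hatom0 i b a b mAi hb hab (fun h => hai h.1))
      (hatom0 i b a j mAi hb haj (fun h => hai h.1))
      (hatom0 i b i b mAi hb hib (fun h => hbj h.2))
      (hatom2 b hbj)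
      (hatom0 i j a b mAi mBj hab (fun h => hai h.1))
      (hatom0 i j a j mAi mBj haj (fun h => hai h.1))
      (hatom0 i j i b mAi mBj hib (fun h => hbj h.2))
      hatom1
    refine h.trans (Filter.Eventually.of_forall fun ω => ?_)
    simp only [hR, Pi.zero_apply]
    ring
  have hT1 : ℙ[(fun ω => ((X i j ω - X i k ω) - (X l j ω - X l k ω)) * ((U i j ω - U i k ω) - (U l j ω - U l k ω)))|G] =ᵐ[ℙ] R :=
    hsh1 k l mBk mAl hjk.symm hil.symm hik hjl.symm hkl.symm
  have hT2 : ℙ[(fun ω => ((X i j ω - X i l ω) - (X k j ω - X k l ω)) * ((U i j ω - U i l ω) - (U k j ω - U k l ω)))|G] =ᵐ[ℙ] R :=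
    hsh1 l k mBl mAk hjl.symm hik.symm hil hjk.symm hkl
  have hT3 : ℙ[(fun ω => ((X i k ω - X i j ω) - (X l k ω - X l j ω)) * ((U i k ω - U i j ω) - (U l k ω - U l j ω)))|G] =ᵐ[ℙ] R :=
    hsh2 k l mBk mAl hjk.symm hil.symm hik hkl.symm hjl.symm
  have hT4 : ℙ[(fun ω => ((X i k ω - X i l ω) - (X j k ω - X j l ω)) * ((U i k ω - U i l ω) - (U j k ω - U j l ω)))|G] =ᵐ[ℙ] 0 :=
    hsh0 i k l j mAi mAj mBk mBl hik hil hjk hjl (fun h => absurd h.2 hjk.symm) (fun h => absurd h.2 hjl.symm) (fun h => absurd h.1 hij.symm) (fun h => absurd h.1 hij.symm)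
  have hT5 : ℙ[(fun ω => ((X i l ω - X i j ω) - (X k l ω - X k j ω)) * ((U i l ω - U i j ω) - (U k l ω - U k j ω)))|G] =ᵐ[ℙ] R :=
    hsh2 l k mBl mAk hjl.symm hik.symm hil hkl hjk.symm
  have hT6 : ℙ[(fun ω => ((X i l ω - X i k ω) - (X j l ω - X j k ω)) * ((U i l ω - U i k ω) - (U j l ω - U j k ω)))|G] =ᵐ[ℙ] 0 :=
    hsh0 i l k j mAi mAj mBl mBk hil hik hjl hjk (fun h => absurd h.2 hjl.symm) (fun h => absurd h.2 hjk.symm) (fun h => absurd h.1 hij.symm) (fun h => absurd h.1 hij.symm)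
  have hT7 : ℙ[(fun ω => ((X j i ω - X j k ω) - (X l i ω - X l k ω)) * ((U j i ω - U j k ω) - (U l i ω - U l k ω)))|G] =ᵐ[ℙ] 0 :=
    hsh0 j i k l mAj mAl mBi mBk hij.symm hjk hil.symm hkl.symm (fun h => absurd h.1 hij.symm) (fun h => absurd h.1 hij.symm) (fun h => absurd h.1 hil.symm) (fun h => absurd h.1 hil.symm)
  have hT8 : ℙ[(fun ω => ((X j i ω - X j l ω) - (X k i ω - X k l ω)) * ((U j i ω - U j l ω) - (U k i ω - U k l ω)))|G] =ᵐ[ℙ] 0 :=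
    hsh0 j i l k mAj mAk mBi mBl hij.symm hjl hik.symm hkl (fun h => absurd h.1 hij.symm) (fun h => absurd h.1 hij.symm) (fun h => absurd h.1 hik.symm) (fun h => absurd h.1 hik.symm)
  have hT9 : ℙ[(fun ω => ((X j k ω - X j i ω) - (X l k ω - X l i ω)) * ((U j k ω - U j i ω) - (U l k ω - U l i ω)))|G] =ᵐ[ℙ] 0 :=
    hsh0 j k i l mAj mAl mBk mBi hjk hij.symm hkl.symm hil.symm (fun h => absurd h.1 hij.symm) (fun h => absurd h.1 hij.symm) (fun h => absurd h.1 hil.symm) (fun h => absurd h.1 hil.symm)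
  have hT10 : ℙ[(fun ω => ((X j k ω - X j l ω) - (X i k ω - X i l ω)) * ((U j k ω - U j l ω) - (U i k ω - U i l ω)))|G] =ᵐ[ℙ] 0 :=
    hsh0 j k l i mAj mAi mBk mBl hjk hjl hik hil (fun h => absurd h.1 hij.symm) (fun h => absurd h.1 hij.symm) (fun h => absurd h.2 hjk.symm) (fun h => absurd h.2 hjl.symm)
  have hT11 : ℙ[(fun ω => ((X j l ω - X j i ω) - (X k l ω - X k i ω)) * ((U j l ω - U j i ω) - (U k l ω - U k i ω)))|G] =ᵐ[ℙ] 0 :=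
    hsh0 j l i k mAj mAk mBl mBi hjl hij.symm hkl hik.symm (fun h => absurd h.1 hij.symm) (fun h => absurd h.1 hij.symm) (fun h => absurd h.1 hik.symm) (fun h => absurd h.1 hik.symm)
  have hT12 : ℙ[(fun ω => ((X j l ω - X j k ω) - (X i l ω - X i k ω)) * ((U j l ω - U j k ω) - (U i l ω - U i k ω)))|G] =ᵐ[ℙ] 0 :=
    hsh0 j l k i mAj mAi mBl mBk hjl hjk hil hik (fun h => absurd h.1 hij.symm) (fun h => absurd h.1 hij.symm) (fun h => absurd h.2 hjl.symm) (fun h => absurd h.2 hjk.symm)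
  have hT13 : ℙ[(fun ω => ((X k i ω - X k j ω) - (X l i ω - X l j ω)) * ((U k i ω - U k j ω) - (U l i ω - U l j ω)))|G] =ᵐ[ℙ] 0 :=
    hsh0 k i j l mAk mAl mBi mBj hik.symm hjk.symm hil.symm hjl.symm (fun h => absurd h.1 hik.symm) (fun h => absurd h.1 hik.symm) (fun h => absurd h.1 hil.symm) (fun h => absurd h.1 hil.symm)
  have hT14 : ℙ[(fun ω => ((X k i ω - X k l ω) - (X j i ω - X j l ω)) * ((U k i ω - U k l ω) - (U j i ω - U j l ω)))|G] =ᵐ[ℙ] 0 :=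
    hsh0 k i l j mAk mAj mBi mBl hik.symm hkl hij.symm hjl (fun h => absurd h.1 hik.symm) (fun h => absurd h.1 hik.symm) (fun h => absurd h.1 hij.symm) (fun h => absurd h.1 hij.symm)
  have hT15 : ℙ[(fun ω => ((X k j ω - X k i ω) - (X l j ω - X l i ω)) * ((U k j ω - U k i ω) - (U l j ω - U l i ω)))|G] =ᵐ[ℙ] 0 :=
    hsh0 k j i l mAk mAl mBj mBi hjk.symm hik.symm hjl.symm hil.symm (fun h => absurd h.1 hik.symm) (fun h => absurd h.1 hik.symm) (fun h => absurd h.1 hil.symm) (fun h => absurd h.1 hil.symm)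
  have hT16 : ℙ[(fun ω => ((X k j ω - X k l ω) - (X i j ω - X i l ω)) * ((U k j ω - U k l ω) - (U i j ω - U i l ω)))|G] =ᵐ[ℙ] R :=
    hsh3 k l mAk mBl hik.symm hjl.symm hjk.symm hkl hil
  have hT17 : ℙ[(fun ω => ((X k l ω - X k i ω) - (X j l ω - X j i ω)) * ((U k l ω - U k i ω) - (U j l ω - U j i ω)))|G] =ᵐ[ℙ] 0 :=
    hsh0 k l i j mAk mAj mBl mBi hkl hik.symm hjl hij.symm (fun h => absurd h.1 hik.symm) (fun h => absurd h.1 hik.symm) (fun h => absurd h.1 hij.symm) (fun h => absurd h.1 hij.symm)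
  have hT18 : ℙ[(fun ω => ((X k l ω - X k j ω) - (X i l ω - X i j ω)) * ((U k l ω - U k j ω) - (U i l ω - U i j ω)))|G] =ᵐ[ℙ] R :=
    hsh4 k l mAk mBl hik.symm hjl.symm hkl hjk.symm hil
  have hT19 : ℙ[(fun ω => ((X l i ω - X l j ω) - (X k i ω - X k j ω)) * ((U l i ω - U l j ω) - (U k i ω - U k j ω)))|G] =ᵐ[ℙ] 0 :=
    hsh0 l i j k mAl mAk mBi mBj hil.symm hjl.symm hik.symm hjk.symm (fun h => absurd h.1 hil.symm) (fun h => absurd h.1 hil.symm) (fun h => absurd h.1 hik.symm) (fun h => absurd h.1 hik.symm)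
  have hT20 : ℙ[(fun ω => ((X l i ω - X l k ω) - (X j i ω - X j k ω)) * ((U l i ω - U l k ω) - (U j i ω - U j k ω)))|G] =ᵐ[ℙ] 0 :=
    hsh0 l i k j mAl mAj mBi mBk hil.symm hkl.symm hij.symm hjk (fun h => absurd h.1 hil.symm) (fun h => absurd h.1 hil.symm) (fun h => absurd h.1 hij.symm) (fun h => absurd h.1 hij.symm)
  have hT21 : ℙ[(fun ω => ((X l j ω - X l i ω) - (X k j ω - X k i ω)) * ((U l j ω - U l i ω) - (U k j ω - U k i ω)))|G] =ᵐ[ℙ] 0 :=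
    hsh0 l j i k mAl mAk mBj mBi hjl.symm hil.symm hjk.symm hik.symm (fun h => absurd h.1 hil.symm) (fun h => absurd h.1 hil.symm) (fun h => absurd h.1 hik.symm) (fun h => absurd h.1 hik.symm)
  have hT22 : ℙ[(fun ω => ((X l j ω - X l k ω) - (X i j ω - X i k ω)) * ((U l j ω - U l k ω) - (U i j ω - U i k ω)))|G] =ᵐ[ℙ] R :=
    hsh3 l k mAl mBk hil.symm hjk.symm hjl.symm hkl.symm hik
  have hT23 : ℙ[(fun ω => ((X l k ω - X l i ω) - (X j k ω - X j i ω)) * ((U l k ω - U l i ω) - (U j k ω - U j i ω)))|G] =ᵐ[ℙ] 0 :=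
    hsh0 l k i j mAl mAj mBk mBi hkl.symm hil.symm hjk hij.symm (fun h => absurd h.1 hil.symm) (fun h => absurd h.1 hil.symm) (fun h => absurd h.1 hij.symm) (fun h => absurd h.1 hij.symm)
  have hT24 : ℙ[(fun ω => ((X l k ω - X l j ω) - (X i k ω - X i j ω)) * ((U l k ω - U l j ω) - (U i k ω - U i j ω)))|G] =ᵐ[ℙ] R :=
    hsh4 l k mAl mBk hil.symm hjk.symm hkl.symm hjl.symm hik
  set BIG : Ω → ℝ := fun ω =>
      ((X i j ω - X i k ω) - (X l j ω - X l k ω)) * ((U i j ω - U i k ω) - (U l j ω - U l k ω))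
      + ((X i j ω - X i l ω) - (X k j ω - X k l ω)) * ((U i j ω - U i l ω) - (U k j ω - U k l ω))
      + ((X i k ω - X i j ω) - (X l k ω - X l j ω)) * ((U i k ω - U i j ω) - (U l k ω - U l j ω))
      + ((X i k ω - X i l ω) - (X j k ω - X j l ω)) * ((U i k ω - U i l ω) - (U j k ω - U j l ω))
      + ((X i l ω - X i j ω) - (X k l ω - X k j ω)) * ((U i l ω - U i j ω) - (U k l ω - U k j ω))
      + ((X i l ω - X i k ω) - (X j l ω - X j k ω)) * ((U i l ω - U i k ω) - (U j l ω - U j k ω))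
      + ((X j i ω - X j k ω) - (X l i ω - X l k ω)) * ((U j i ω - U j k ω) - (U l i ω - U l k ω))
      + ((X j i ω - X j l ω) - (X k i ω - X k l ω)) * ((U j i ω - U j l ω) - (U k i ω - U k l ω))
      + ((X j k ω - X j i ω) - (X l k ω - X l i ω)) * ((U j k ω - U j i ω) - (U l k ω - U l i ω))
      + ((X j k ω - X j l ω) - (X i k ω - X i l ω)) * ((U j k ω - U j l ω) - (U i k ω - U i l ω))
      + ((X j l ω - X j i ω) - (X k l ω - X k i ω)) * ((U j l ω - U j i ω) - (U k l ω - U k i ω))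
      + ((X j l ω - X j k ω) - (X i l ω - X i k ω)) * ((U j l ω - U j k ω) - (U i l ω - U i k ω))
      + ((X k i ω - X k j ω) - (X l i ω - X l j ω)) * ((U k i ω - U k j ω) - (U l i ω - U l j ω))
      + ((X k i ω - X k l ω) - (X j i ω - X j l ω)) * ((U k i ω - U k l ω) - (U j i ω - U j l ω))
      + ((X k j ω - X k i ω) - (X l j ω - X l i ω)) * ((U k j ω - U k i ω) - (U l j ω - U l i ω))
      + ((X k j ω - X k l ω) - (X i j ω - X i l ω)) * ((U k j ω - U k l ω) - (U i j ω - U i l ω))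
      + ((X k l ω - X k i ω) - (X j l ω - X j i ω)) * ((U k l ω - U k i ω) - (U j l ω - U j i ω))
      + ((X k l ω - X k j ω) - (X i l ω - X i j ω)) * ((U k l ω - U k j ω) - (U i l ω - U i j ω))
      + ((X l i ω - X l j ω) - (X k i ω - X k j ω)) * ((U l i ω - U l j ω) - (U k i ω - U k j ω))
      + ((X l i ω - X l k ω) - (X j i ω - X j k ω)) * ((U l i ω - U l k ω) - (U j i ω - U j k ω))
      + ((X l j ω - X l i ω) - (X k j ω - X k i ω)) * ((U l j ω - U l i ω) - (U k j ω - U k i ω))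
      + ((X l j ω - X l k ω) - (X i j ω - X i k ω)) * ((U l j ω - U l k ω) - (U i j ω - U i k ω))
      + ((X l k ω - X l i ω) - (X j k ω - X j i ω)) * ((U l k ω - U l i ω) - (U j k ω - U j i ω))
      + ((X l k ω - X l j ω) - (X i k ω - X i j ω)) * ((U l k ω - U l j ω) - (U i k ω - U i j ω)) with hBIG
  have hexp : sKer X U ({i, j, k, l} : Finset (Fin N))
      = fun ω => ((Nat.factorial 4 : ℝ))⁻¹ * BIG ω := by
    funext ω
    simp only [sKer]
    congr 1
    rw [hBIG]
    simp only [Finset.sum_insert, Finset.mem_insert, Finset.mem_singleton, Finset.sum_singleton,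
      Finset.erase_insert_of_ne, Finset.erase_insert, Finset.erase_singleton,
      Finset.notMem_singleton, hij, hik, hil, hjk, hjl, hkl,
      hij.symm, hik.symm, hil.symm, hjk.symm, hjl.symm, hkl.symm, not_false_iff, or_self,
      Ne, false_or, or_false, not_false_eq_true, Finset.sum_empty, Finset.notMem_empty]
    ring
  rw [hexp]
  have hsum := aux_condexp_sum24 (m := G) (μ := ℙ)
    (fun ω => ((X i j ω - X i k ω) - (X l j ω - X l k ω)) * ((U i j ω - U i k ω) - (U l j ω - U l k ω)))
    (fun ω => ((X i j ω - X i l ω) - (X k j ω - X k l ω)) * ((U i j ω - U i l ω) - (U k j ω - U k l ω)))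
    (fun ω => ((X i k ω - X i j ω) - (X l k ω - X l j ω)) * ((U i k ω - U i j ω) - (U l k ω - U l j ω)))
    (fun ω => ((X i k ω - X i l ω) - (X j k ω - X j l ω)) * ((U i k ω - U i l ω) - (U j k ω - U j l ω)))
    (fun ω => ((X i l ω - X i j ω) - (X k l ω - X k j ω)) * ((U i l ω - U i j ω) - (U k l ω - U k j ω)))
    (fun ω => ((X i l ω - X i k ω) - (X j l ω - X j k ω)) * ((U i l ω - U i k ω) - (U j l ω - U j k ω)))
    (fun ω => ((X j i ω - X j k ω) - (X l i ω - X l k ω)) * ((U j i ω - U j k ω) - (U l i ω - U l k ω)))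
    (fun ω => ((X j i ω - X j l ω) - (X k i ω - X k l ω)) * ((U j i ω - U j l ω) - (U k i ω - U k l ω)))
    (fun ω => ((X j k ω - X j i ω) - (X l k ω - X l i ω)) * ((U j k ω - U j i ω) - (U l k ω - U l i ω)))
    (fun ω => ((X j k ω - X j l ω) - (X i k ω - X i l ω)) * ((U j k ω - U j l ω) - (U i k ω - U i l ω)))
    (fun ω => ((X j l ω - X j i ω) - (X k l ω - X k i ω)) * ((U j l ω - U j i ω) - (U k l ω - U k i ω)))
    (fun ω => ((X j l ω - X j k ω) - (X i l ω - X i k ω)) * ((U j l ω - U j k ω) - (U i l ω - U i k ω)))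
    (fun ω => ((X k i ω - X k j ω) - (X l i ω - X l j ω)) * ((U k i ω - U k j ω) - (U l i ω - U l j ω)))
    (fun ω => ((X k i ω - X k l ω) - (X j i ω - X j l ω)) * ((U k i ω - U k l ω) - (U j i ω - U j l ω)))
    (fun ω => ((X k j ω - X k i ω) - (X l j ω - X l i ω)) * ((U k j ω - U k i ω) - (U l j ω - U l i ω)))
    (fun ω => ((X k j ω - X k l ω) - (X i j ω - X i l ω)) * ((U k j ω - U k l ω) - (U i j ω - U i l ω)))
    (fun ω => ((X k l ω - X k i ω) - (X j l ω - X j i ω)) * ((U k l ω - U k i ω) - (U j l ω - U j i ω)))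
    (fun ω => ((X k l ω - X k j ω) - (X i l ω - X i j ω)) * ((U k l ω - U k j ω) - (U i l ω - U i j ω)))
    (fun ω => ((X l i ω - X l j ω) - (X k i ω - X k j ω)) * ((U l i ω - U l j ω) - (U k i ω - U k j ω)))
    (fun ω => ((X l i ω - X l k ω) - (X j i ω - X j k ω)) * ((U l i ω - U l k ω) - (U j i ω - U j k ω)))
    (fun ω => ((X l j ω - X l i ω) - (X k j ω - X k i ω)) * ((U l j ω - U l i ω) - (U k j ω - U k i ω)))
    (fun ω => ((X l j ω - X l k ω) - (X i j ω - X i k ω)) * ((U l j ω - U l k ω) - (U i j ω - U i k ω)))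
    (fun ω => ((X l k ω - X l i ω) - (X j k ω - X j i ω)) * ((U l k ω - U l i ω) - (U j k ω - U j i ω)))
    (fun ω => ((X l k ω - X l j ω) - (X i k ω - X i j ω)) * ((U l k ω - U l j ω) - (U i k ω - U i j ω)))
    R R R 0 R 0 0 0 0 0 0 0 0 0 0 R 0 R 0 0 0 R 0 R
    (hFint i j k l)
    (hFint i j l k)
    (hFint i k j l)
    (hFint i k l j)
    (hFint i l j k)
    (hFint i l k j)
    (hFint j i k l)
    (hFint j i l k)
    (hFint j k i l)
    (hFint j k l i)
    (hFint j l i k)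
    (hFint j l k i)
    (hFint k i j l)
    (hFint k i l j)
    (hFint k j i l)
    (hFint k j l i)
    (hFint k l i j)
    (hFint k l j i)
    (hFint l i j k)
    (hFint l i k j)
    (hFint l j i k)
    (hFint l j k i)
    (hFint l k i j)
    (hFint l k j i)
    hT1 hT2 hT3 hT4 hT5 hT6 hT7 hT8 hT9 hT10 hT11 hT12 hT13 hT14 hT15 hT16 hT17 hT18 hT19 hT20 hT21 hT22 hT23 hT24
  have hsmul : ℙ[(fun ω => ((Nat.factorial 4 : ℝ))⁻¹ * BIG ω)|G]
      =ᵐ[ℙ] ((Nat.factorial 4 : ℝ))⁻¹ • ℙ[BIG|G] :=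
    condExp_smul ((Nat.factorial 4 : ℝ))⁻¹ BIG G
  refine hsmul.trans ?_
  have hsum' : ℙ[BIG|G] =ᵐ[ℙ] fun ω => (8 : ℝ) * R ω := by
    refine (hsum.trans (Filter.Eventually.of_forall fun ω => ?_))
    simp only [Pi.zero_apply]
    ring
  filter_upwards [hsum'] with ω h
  rw [Pi.smul_apply, h]
  simp only [hR, smul_eq_mul]
  have h24 : ((Nat.factorial 4 : ℝ)) = 24 := by norm_num [Nat.factorial]
  rw [h24]
  ring
end
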